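/- arXiv:1110.4899 — 9 statements merged into one kernel-verified Lean document; each statement's English description precedes it below -/
import Mathlib

section
/- Let V be a finite-dimensional complex vector space of dimension n ≥ 1, and let T : V → V be a linear operator such that N = T − λ·id is nilpotent with N^(n−1) ≠ 0 for some λ ∈ ℂ (i.e., T has a single Jordan block). Let F_i = ker N^i for i ≥ 0 and F_{−1} = ∅. Then the orbits of the centralizer group C(T) acting on V are exactly the n + 1 sets O_i = F_i \ F_{i−1} for i = 0, 1, …, n; in particular, there are exactly dim V + 1 orbits. -/
/-- The orbit of `v` under the centralizer group of `T`, i.e. the group of invertible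
linear operators commuting with `T`. -/
def centOrbit {V : Type*} [AddCommGroup V] [Module ℂ V]
    (T : Module.End ℂ V) (v : V) : Set V :=
  {w | ∃ U : (Module.End ℂ V)ˣ, Commute (U : Module.End ℂ V) T ∧ w = (U : Module.End ℂ V) v}

open Module

section Aux

variable {V : Type*} [AddCommGroup V] [Module ℂ V]

lemma aux_pow_zero_of_le {N : Module.End ℂ V} {n m : ℕ} (hNn : N ^ n = 0) (h : n ≤ m) :
    N ^ m = 0 := by
  rw [← Nat.sub_add_cancel h, pow_add, hNn, mul_zero]

lemma aux_iter_lindep {n : ℕ} (N : Module.End ℂ V)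
    (hNn : N ^ n = 0) (u : V) (hu : (N ^ (n - 1)) u ≠ 0) :
    LinearIndependent ℂ (fun j : Fin n => (N ^ (j : ℕ)) u) := by
  rw [Fintype.linearIndependent_iff]
  intro g hg
  have key : ∀ m : ℕ, ∀ k : Fin n, (k : ℕ) = m → g k = 0 := by
    intro m
    induction m using Nat.strong_induction_on with
    | _ m ih =>
      intro k hk
      have hkn : m ≤ n - 1 := by have := k.isLt; omega
      have h2 : (N ^ (n - 1 - m)) (∑ j : Fin n, g j • (N ^ (j : ℕ)) u) = 0 := by
        rw [hg, map_zero]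
      rw [map_sum] at h2
      have h3 : ∀ j : Fin n, j ∈ Finset.univ → j ≠ k →
          (N ^ (n - 1 - m)) (g j • (N ^ (j : ℕ)) u) = 0 := by
        intro j _ hj
        rcases lt_or_gt_of_ne (fun h : (j : ℕ) = (k : ℕ) => hj (Fin.ext h)) with hlt | hgt
        · rw [ih j (hk ▸ hlt) j rfl, zero_smul, map_zero]
        · rw [map_smul, ← Module.End.mul_apply, ← pow_add,
            aux_pow_zero_of_le hNn (by omega), LinearMap.zero_apply, smul_zero]
      rw [Finset.sum_eq_single_of_mem k (Finset.mem_univ k) h3] at h2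
      rw [map_smul, ← Module.End.mul_apply, ← pow_add] at h2
      have he : n - 1 - m + (k : ℕ) = n - 1 := by omega
      rw [he] at h2
      exact (smul_eq_zero.mp h2).resolve_right hu
  exact fun k => key (k : ℕ) k rfl

lemma aux_cyclic_basis [FiniteDimensional ℂ V] {n : ℕ} (hn : n = finrank ℂ V) (hn1 : 1 ≤ n)
    (N : Module.End ℂ V) (hNn : N ^ n = 0) (u : V) (hu : (N ^ (n - 1)) u ≠ 0) :
    ∃ b : Basis (Fin n) ℂ V, ∀ j : Fin n, b j = (N ^ (j : ℕ)) u := by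
  haveI : Nonempty (Fin n) := ⟨⟨0, by omega⟩⟩
  have hli := aux_iter_lindep N hNn u hu
  have hcard : Fintype.card (Fin n) = finrank ℂ V := by simpa using hn
  exact ⟨basisOfLinearIndependentOfCardEqFinrank hli hcard, fun j =>
    congrFun (coe_basisOfLinearIndependentOfCardEqFinrank hli hcard) j⟩

lemma aux_finrank_ker_pow [FiniteDimensional ℂ V] {n : ℕ} (hn : n = finrank ℂ V) (hn1 : 1 ≤ n)
    (N : Module.End ℂ V) (hNn : N ^ n = 0) (hbl : N ^ (n - 1) ≠ 0)
    {i : ℕ} (hi : i ≤ n) :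
    finrank ℂ (LinearMap.ker (N ^ i)) = i := by
  obtain ⟨u, hu⟩ : ∃ u, (N ^ (n - 1)) u ≠ 0 := by
    by_contra h
    push_neg at h
    exact hbl (LinearMap.ext fun x => h x)
  obtain ⟨b, hb⟩ := aux_cyclic_basis hn hn1 N hNn u hu
  have hge : i ≤ finrank ℂ (LinearMap.ker (N ^ i)) := by
    obtain ⟨f, hfval⟩ : ∃ f : Fin i → Fin n, ∀ m, (f m : ℕ) = n - i + (m : ℕ) :=
      ⟨fun m => ⟨n - i + (m : ℕ), by have := m.isLt; omega⟩, fun m => rfl⟩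
    have hf : Function.Injective f := by
      intro a c h
      have h2 := congrArg Fin.val h
      rw [hfval, hfval] at h2
      exact Fin.ext (by omega)
    have hli : LinearIndependent ℂ (⇑b ∘ f) := b.linearIndependent.comp f hf
    have hsub : Submodule.span ℂ (Set.range (⇑b ∘ f)) ≤ LinearMap.ker (N ^ i) := by
      rw [Submodule.span_le]
      rintro _ ⟨m, rfl⟩
      simp only [Function.comp_apply, SetLike.mem_coe, LinearMap.mem_ker, hb]
      rw [← Module.End.mul_apply, ← pow_add, hfval,
        aux_pow_zero_of_le hNn (by have := m.isLt; omega), LinearMap.zero_apply]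
    calc i = finrank ℂ (Submodule.span ℂ (Set.range (⇑b ∘ f))) := by
            rw [finrank_span_eq_card hli, Fintype.card_fin]
      _ ≤ finrank ℂ (LinearMap.ker (N ^ i)) := Submodule.finrank_mono hsub
  have hrange : n - i ≤ finrank ℂ (LinearMap.range (N ^ i)) := by
    obtain ⟨f, hfval⟩ : ∃ f : Fin (n - i) → Fin n, ∀ m, (f m : ℕ) = i + (m : ℕ) :=
      ⟨fun m => ⟨i + (m : ℕ), by have := m.isLt; omega⟩, fun m => rfl⟩
    have hf : Function.Injective f := by
      intro a c h
      have h2 := congrArg Fin.val h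
      rw [hfval, hfval] at h2
      exact Fin.ext (by omega)
    have hli : LinearIndependent ℂ (⇑b ∘ f) := b.linearIndependent.comp f hf
    have hsub : Submodule.span ℂ (Set.range (⇑b ∘ f)) ≤ LinearMap.range (N ^ i) := by
      rw [Submodule.span_le]
      rintro _ ⟨m, rfl⟩
      simp only [Function.comp_apply, SetLike.mem_coe, LinearMap.mem_range, hb]
      exact ⟨(N ^ (m : ℕ)) u, by rw [← Module.End.mul_apply, ← pow_add, hfval]⟩
    calc n - i = finrank ℂ (Submodule.span ℂ (Set.range (⇑b ∘ f))) := by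
            rw [finrank_span_eq_card hli, Fintype.card_fin]
      _ ≤ finrank ℂ (LinearMap.range (N ^ i)) := Submodule.finrank_mono hsub
  have hrn := LinearMap.finrank_range_add_finrank_ker (N ^ i)
  rw [← hn] at hrn
  omega

lemma aux_ker_pow_eq_range [FiniteDimensional ℂ V] {n : ℕ} (hn : n = finrank ℂ V) (hn1 : 1 ≤ n)
    (N : Module.End ℂ V) (hNn : N ^ n = 0) (hbl : N ^ (n - 1) ≠ 0)
    {i : ℕ} (hi : i ≤ n) :
    LinearMap.range (N ^ (n - i)) = LinearMap.ker (N ^ i) := by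
  have hle : LinearMap.range (N ^ (n - i)) ≤ LinearMap.ker (N ^ i) := by
    rintro _ ⟨x, rfl⟩
    rw [LinearMap.mem_ker, ← Module.End.mul_apply, ← pow_add,
      (by omega : i + (n - i) = n), hNn, LinearMap.zero_apply]
  refine Submodule.eq_of_le_of_finrank_le hle ?_
  rw [aux_finrank_ker_pow hn hn1 N hNn hbl hi]
  have hrn := LinearMap.finrank_range_add_finrank_ker (N ^ (n - i))
  rw [← hn, aux_finrank_ker_pow hn hn1 N hNn hbl (by omega : n - i ≤ n)] at hrn
  omega

lemma aux_unit_inj (U : (Module.End ℂ V)ˣ) :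
    Function.Injective ⇑(U : Module.End ℂ V) := by
  intro x y h
  have h2 : ((U⁻¹ : (Module.End ℂ V)ˣ) : Module.End ℂ V) ((U : Module.End ℂ V) x)
      = ((U⁻¹ : (Module.End ℂ V)ˣ) : Module.End ℂ V) ((U : Module.End ℂ V) y) := by rw [h]
  rw [← Module.End.mul_apply, ← Module.End.mul_apply, U.inv_mul] at h2
  simpa using h2

lemma aux_exists_unit [FiniteDimensional ℂ V] {n : ℕ} (hn : n = finrank ℂ V) (hn1 : 1 ≤ n)
    (N : Module.End ℂ V) (hNn : N ^ n = 0) (hbl : N ^ (n - 1) ≠ 0)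
    {i : ℕ} (hi1 : 1 ≤ i) (hi : i ≤ n) {v w : V}
    (hv : (N ^ i) v = 0) (hv' : (N ^ (i - 1)) v ≠ 0)
    (hw : (N ^ i) w = 0) (hw' : (N ^ (i - 1)) w ≠ 0) :
    ∃ U : (Module.End ℂ V)ˣ, Commute (U : Module.End ℂ V) N ∧ w = (U : Module.End ℂ V) v := by
  obtain ⟨u, hu⟩ : v ∈ LinearMap.range (N ^ (n - i)) := by
    rw [aux_ker_pow_eq_range hn hn1 N hNn hbl hi]; exact hv
  obtain ⟨u', hu'⟩ : w ∈ LinearMap.range (N ^ (n - i)) := by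
    rw [aux_ker_pow_eq_range hn hn1 N hNn hbl hi]; exact hw
  have hsplit : N ^ (n - 1) = N ^ (i - 1) * N ^ (n - i) := by
    rw [← pow_add]; congr 1; omega
  have hcu : (N ^ (n - 1)) u ≠ 0 := by
    rw [hsplit, Module.End.mul_apply, hu]; exact hv'
  have hcu' : (N ^ (n - 1)) u' ≠ 0 := by
    rw [hsplit, Module.End.mul_apply, hu']; exact hw'
  obtain ⟨b, hb⟩ := aux_cyclic_basis hn hn1 N hNn u hcu
  obtain ⟨b', hb'⟩ := aux_cyclic_basis hn hn1 N hNn u' hcu'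
  let e := b.equiv b' (Equiv.refl _)
  have he : ∀ j : Fin n, e (b j) = b' j := fun j => by
    simp [e, Basis.equiv_apply]
  refine ⟨⟨e.toLinearMap, e.symm.toLinearMap,
    LinearMap.ext fun x => e.apply_symm_apply x,
    LinearMap.ext fun x => e.symm_apply_apply x⟩, ?_, ?_⟩
  · -- Commute e N
    show e.toLinearMap * N = N * e.toLinearMap
    refine b.ext fun j => ?_
    rcases Nat.lt_or_ge ((j : ℕ) + 1) n with hlt | hge
    · have h1 : N (b j) = b ⟨(j : ℕ) + 1, hlt⟩ := by
        rw [hb, hb, ← Module.End.mul_apply, ← pow_succ']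
      have h2 : N (b' j) = b' ⟨(j : ℕ) + 1, hlt⟩ := by
        rw [hb', hb', ← Module.End.mul_apply, ← pow_succ']
      simp only [Module.End.mul_apply, LinearMap.coe_comp, Function.comp_apply,
        LinearEquiv.coe_coe]
      rw [h1, he, he, h2]
    · have hjn : (j : ℕ) + 1 = n := by have := j.isLt; omega
      have h1 : N (b j) = 0 := by
        rw [hb, ← Module.End.mul_apply, ← pow_succ', hjn, hNn, LinearMap.zero_apply]
      have h2 : N (b' j) = 0 := by
        rw [hb', ← Module.End.mul_apply, ← pow_succ', hjn, hNn, LinearMap.zero_apply]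
      simp only [Module.End.mul_apply, LinearEquiv.coe_coe]
      rw [h1, he, h2, map_zero]
  · -- w = e v
    have hni : n - i < n := by omega
    have hvb : v = b ⟨n - i, hni⟩ := by rw [hb, hu]
    have hwb : w = b' ⟨n - i, hni⟩ := by rw [hb', hu']
    show w = e v
    rw [hvb, he, ← hwb]

lemma aux_commute_iff (T : Module.End ℂ V) (lam : ℂ) (U : Module.End ℂ V) :
    Commute U T ↔ Commute U (T - lam • 1) := by
  have h1 : Commute U (lam • 1 : Module.End ℂ V) := (Commute.one_right U).smul_right lam
  constructor
  · intro h; exact h.sub_right h1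
  · intro h
    have h2 := h.add_right h1
    rwa [sub_add_cancel] at h2

lemma aux_orbit_zero (T : Module.End ℂ V) : centOrbit T 0 = ({0} : Set V) := by
  ext w
  constructor
  · rintro ⟨U, _, rfl⟩
    simp
  · rintro rfl
    exact ⟨1, Commute.one_left T, by simp⟩

lemma aux_orbit_char [FiniteDimensional ℂ V] {n : ℕ} (hn : n = finrank ℂ V) (hn1 : 1 ≤ n)
    (T : Module.End ℂ V) (lam : ℂ) (hNn : (T - lam • 1) ^ n = 0)
    (hbl : (T - lam • 1) ^ (n - 1) ≠ 0)
    {i : ℕ} (hi1 : 1 ≤ i) (hi : i ≤ n) {v : V}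
    (hv : ((T - lam • 1) ^ i) v = 0) (hv' : ((T - lam • 1) ^ (i - 1)) v ≠ 0) :
    centOrbit T v = (LinearMap.ker ((T - lam • 1) ^ i) : Set V) \
      (LinearMap.ker ((T - lam • 1) ^ (i - 1)) : Set V) := by
  set N := T - lam • 1 with hNdef
  ext w
  constructor
  · rintro ⟨U, hUT, rfl⟩
    have hUN : Commute (U : Module.End ℂ V) N := (aux_commute_iff T lam _).mp hUT
    have hcp : ∀ k : ℕ, (N ^ k) ((U : Module.End ℂ V) v)
        = (U : Module.End ℂ V) ((N ^ k) v) := by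
      intro k
      have h3 := (hUN.pow_right k)
      calc (N ^ k) ((U : Module.End ℂ V) v) = ((N ^ k) * (U : Module.End ℂ V)) v := rfl
        _ = ((U : Module.End ℂ V) * (N ^ k)) v := by rw [h3]
        _ = (U : Module.End ℂ V) ((N ^ k) v) := rfl
    constructor
    · show (U : Module.End ℂ V) v ∈ (LinearMap.ker (N ^ i) : Set V)
      simp only [SetLike.mem_coe, LinearMap.mem_ker]
      rw [hcp, hv, map_zero]
    · intro hmem
      simp only [SetLike.mem_coe, LinearMap.mem_ker, hcp] at hmem
      have : (N ^ (i - 1)) v = 0 := by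
        have := aux_unit_inj U (by rw [hmem, map_zero] : (U : Module.End ℂ V) ((N ^ (i-1)) v) = (U : Module.End ℂ V) 0)
        exact this
      exact hv' this
  · rintro ⟨hw1, hw2⟩
    simp only [SetLike.mem_coe, LinearMap.mem_ker] at hw1 hw2
    obtain ⟨U, hUN, hUv⟩ := aux_exists_unit hn hn1 N hNn hbl hi1 hi hv hv' hw1 hw2
    exact ⟨U, (aux_commute_iff T lam _).mpr hUN, hUv⟩

lemma aux_ker_mono {N : Module.End ℂ V} {a b : ℕ} (h : a ≤ b) :
    LinearMap.ker (N ^ a) ≤ LinearMap.ker (N ^ b) := by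
  intro x hx
  rw [LinearMap.mem_ker] at hx ⊢
  rw [← Nat.sub_add_cancel h, pow_add, Module.End.mul_apply, hx, map_zero]

end Aux

/-- If `T` has a single Jordan block (i.e. `N = T - λ·id` is nilpotent with `N^(n-1) ≠ 0`,
where `n = dim V ≥ 1`), then the orbits of the centralizer group of `T` on `V` are exactly
the `n + 1` sets `O_i = ker N^i \ ker N^(i-1)` (with `O_0 = ker N^0 \ ∅ = {0}`); in
particular there are exactly `dim V + 1` orbits. -/
theorem stmt0 (V : Type*) [AddCommGroup V] [Module ℂ V] [FiniteDimensional ℂ V]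
    (n : ℕ) (hn : n = Module.finrank ℂ V) (hn1 : 1 ≤ n)
    (T : Module.End ℂ V) (lam : ℂ)
    (hnil : IsNilpotent (T - lam • 1)) (hblock : (T - lam • 1) ^ (n - 1) ≠ 0)
    (O : ℕ → Set V)
    (hO : ∀ i : ℕ, O i = if i = 0 then ({0} : Set V)
      else (LinearMap.ker ((T - lam • 1) ^ i) : Set V) \
        (LinearMap.ker ((T - lam • 1) ^ (i - 1)) : Set V)) :
    {s : Set V | ∃ v : V, s = centOrbit T v} = O '' Set.Iic n ∧
    Set.InjOn O (Set.Iic n) ∧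
    {s : Set V | ∃ v : V, s = centOrbit T v}.ncard = Module.finrank ℂ V + 1 := by
  classical
  set N := T - lam • 1 with hNdef
  have hNn : N ^ n = 0 := by
    rw [hn]
    have h := (LinearMap.isNilpotent_iff_charpoly N).mp hnil
    have h2 := N.aeval_self_charpoly
    rw [h] at h2
    simpa using h2
  -- existence of elements of each exact height 1 ≤ i ≤ n
  have hexact : ∀ i : ℕ, 1 ≤ i → i ≤ n →
      ∃ v : V, (N ^ i) v = 0 ∧ (N ^ (i - 1)) v ≠ 0 := by
    intro i hi1 hi
    have hne : LinearMap.ker (N ^ (i - 1)) ≠ LinearMap.ker (N ^ i) := by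
      intro h
      have h1 := aux_finrank_ker_pow hn hn1 N hNn hblock (by omega : i - 1 ≤ n)
      have h2 := aux_finrank_ker_pow hn hn1 N hNn hblock hi
      rw [h] at h1
      omega
    obtain ⟨x, hx1, hx2⟩ := SetLike.exists_of_lt
      (lt_of_le_of_ne (aux_ker_mono (by omega)) hne)
    exact ⟨x, hx1, fun h => hx2 h⟩
  -- orbit of each v equals O (height v)
  have horbit : ∀ v : V, ∃ i ≤ n, centOrbit T v = O i := by
    intro v
    by_cases hv0 : v = 0
    · refine ⟨0, Nat.zero_le n, ?_⟩
      rw [hv0, aux_orbit_zero, hO 0, if_pos rfl]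
    · have hex : ∃ k : ℕ, (N ^ k) v = 0 := ⟨n, by rw [hNn]; rfl⟩
      set i := Nat.find hex with hidef
      have hi : i ≤ n := Nat.find_le (by rw [hNn]; rfl)
      have hspec : (N ^ i) v = 0 := Nat.find_spec hex
      have hi1 : 1 ≤ i := by
        rcases Nat.eq_zero_or_pos i with h | h
        · exfalso; apply hv0; rw [h, pow_zero] at hspec; simpa using hspec
        · exact h
      have hmin : (N ^ (i - 1)) v ≠ 0 := Nat.find_min hex (by omega)
      refine ⟨i, hi, ?_⟩
      rw [aux_orbit_char hn hn1 T lam hNn hblock hi1 hi hspec hmin, hO i,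
        if_neg (by omega)]
  -- each O i, i ≤ n, is an orbit
  have hisorbit : ∀ i ≤ n, ∃ v : V, O i = centOrbit T v := by
    intro i hi
    rcases Nat.eq_zero_or_pos i with h0 | h1
    · exact ⟨0, by rw [h0, hO 0, if_pos rfl, aux_orbit_zero]⟩
    · obtain ⟨v, hv1, hv2⟩ := hexact i h1 hi
      exact ⟨v, by
        rw [hO i, if_neg (by omega), aux_orbit_char hn hn1 T lam hNn hblock h1 hi hv1 hv2]⟩
  -- Part 1
  have hpart1 : {s : Set V | ∃ v : V, s = centOrbit T v} = O '' Set.Iic n := by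
    ext s
    constructor
    · rintro ⟨v, rfl⟩
      obtain ⟨i, hi, heq⟩ := horbit v
      exact ⟨i, hi, heq.symm⟩
    · rintro ⟨i, hi, rfl⟩
      exact hisorbit i hi
  -- Part 2
  have hpart2 : Set.InjOn O (Set.Iic n) := by
    have haux : ∀ i j : ℕ, i < j → j ≤ n → O i ≠ O j := by
      intro i j hij hj heq
      obtain ⟨x, hx1, hx2⟩ := hexact j (by omega) hj
      have hxOj : x ∈ O j := by
        rw [hO j, if_neg (by omega)]
        exact ⟨hx1, fun h => hx2 h⟩
      rw [← heq] at hxOj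
      have hxker : x ∈ LinearMap.ker (N ^ (j - 1)) := by
        rcases Nat.eq_zero_or_pos i with h0 | h1
        · rw [hO i, if_pos h0] at hxOj
          rw [Set.mem_singleton_iff] at hxOj
          rw [LinearMap.mem_ker, hxOj, map_zero]
        · rw [hO i, if_neg (by omega)] at hxOj
          exact aux_ker_mono (by omega) hxOj.1
      exact hx2 hxker
    intro i hi j hj heq
    rcases lt_trichotomy i j with h | h | h
    · exact absurd heq (haux i j h hj)
    · exact h
    · exact absurd heq.symm (haux j i h hi)
  refine ⟨hpart1, hpart2, ?_⟩
  rw [hpart1, Set.ncard_image_of_injOn hpart2, ← Finset.coe_Iic, Set.ncard_coe_finset,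
    Nat.card_Iic, hn]
end

section
/- Let V be a finite-dimensional complex vector space and T : V → V any linear operator. Then there are only finitely many orbits of the centralizer group C(T) acting on V; that is, the set of orbits {C(T)v : v ∈ V} is finite. -/
open Polynomial Module
open scoped DirectSum

theorem quotPow_exists_unit {R : Type*} [CommRing R] [IsDomain R] [IsPrincipalIdealRing R] {p : R}
    (hp : Irreducible p) (e : ℕ) (x : R ⧸ (R ∙ p ^ e)) :
    ∃ (a : ℕ) (u : (R ⧸ (R ∙ p ^ e))ˣ), a ≤ e ∧
      x = u * (Ideal.Quotient.mk (R ∙ p ^ e) (p ^ a)) := by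
  obtain ⟨r, rfl⟩ := Ideal.Quotient.mk_surjective (I := R ∙ p ^ e) x
  by_cases hd : p ^ e ∣ r
  · refine ⟨e, 1, le_refl e, ?_⟩
    have h1 : (Ideal.Quotient.mk (R ∙ p ^ e) r) = 0 := by
      rw [Ideal.Quotient.eq_zero_iff_mem, Submodule.mem_span_singleton]
      obtain ⟨c, rfl⟩ := hd
      exact ⟨c, mul_comm _ _⟩
    have h2 : (Ideal.Quotient.mk (R ∙ p ^ e) (p ^ e)) = 0 := by
      rw [Ideal.Quotient.eq_zero_iff_mem]
      exact Submodule.mem_span_singleton_self _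
    rw [h1, h2, mul_zero]
  · have hr : r ≠ 0 := by rintro rfl; exact hd (dvd_zero _)
    obtain ⟨n, s, hs, rfl⟩ := WfDvdMonoid.max_power_factor hr hp
    have hne : n ≤ e := by
      by_contra hlt
      exact hd (Dvd.dvd.mul_right (pow_dvd_pow p (le_of_not_ge hlt)) s)
    have hcop : IsCoprime (p ^ e) s := (hp.coprime_iff_not_dvd.mpr hs).pow_left
    obtain ⟨c, d, hcd⟩ := hcop
    have hu : (Ideal.Quotient.mk (R ∙ p ^ e) s) * (Ideal.Quotient.mk _ d) = 1 := by
      rw [← map_mul, ← map_one (Ideal.Quotient.mk (R ∙ p ^ e)), Ideal.Quotient.mk_eq_mk_iff_sub_mem,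
        Submodule.mem_span_singleton]
      refine ⟨-c, ?_⟩
      rw [smul_eq_mul]; linear_combination -hcd
    refine ⟨n, Units.mkOfMulEqOne _ _ hu, hne, ?_⟩
    rw [map_mul]
    exact (mul_comm _ _)

/-- multiplication by a unit of an `R`-algebra as an `R`-linear equivalence -/
def unitMulEquiv {R A : Type*} [CommRing R] [CommRing A] [Algebra R A] (u : Aˣ) : A ≃ₗ[R] A where
  toFun x := u * x
  map_add' x y := mul_add _ _ _
  map_smul' r x := mul_smul_comm r (u : A) x
  invFun x := ↑u⁻¹ * x
  left_inv x := by show ↑u⁻¹ * (↑u * x) = x; rw [← mul_assoc, Units.inv_mul, one_mul]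
  right_inv x := by show ↑u * (↑u⁻¹ * x) = x; rw [← mul_assoc, Units.mul_inv, one_mul]

theorem centOrbit_eq {V : Type*} [AddCommGroup V] [Module ℂ V] {T : Module.End ℂ V} {v w : V}
    (U : (Module.End ℂ V)ˣ) (hU : Commute (U : Module.End ℂ V) T)
    (h : w = (U : Module.End ℂ V) v) : centOrbit T w = centOrbit T v := by
  ext x
  constructor
  · rintro ⟨W, hW, rfl⟩
    exact ⟨W * U, hW.mul_left hU, by rw [h, Units.val_mul, Module.End.mul_apply]⟩
  · rintro ⟨W, hW, rfl⟩
    refine ⟨W * U⁻¹, hW.mul_left hU.units_inv_left, ?_⟩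
    symm
    calc ((W * U⁻¹ : (Module.End ℂ V)ˣ) : Module.End ℂ V) w
        = (W : Module.End ℂ V) (((U⁻¹ : (Module.End ℂ V)ˣ) : Module.End ℂ V)
            ((U : Module.End ℂ V) v)) := by rw [h]; exact Module.End.mul_apply _ _ _
      _ = (W : Module.End ℂ V) (((↑U⁻¹ * ↑U : Module.End ℂ V)) v) := by
            rw [Module.End.mul_apply]
      _ = (W : Module.End ℂ V) v := by rw [Units.inv_mul, Module.End.one_apply]

/-- For any linear operator `T` on a finite-dimensional complex vector space `V`, there are
only finitely many orbits of the centralizer group of `T` acting on `V`. -/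
theorem stmt2 (V : Type*) [AddCommGroup V] [Module ℂ V] [FiniteDimensional ℂ V]
    (T : Module.End ℂ V) :
    {s : Set V | ∃ v : V, s = centOrbit T v}.Finite := by
  classical
  have htor : Module.IsTorsion ℂ[X] (Module.AEval' T) := by
    intro m
    have hT : IsIntegral ℂ T := Algebra.IsIntegral.isIntegral T
    refine ⟨⟨minpoly ℂ T, mem_nonZeroDivisors_of_ne_zero (minpoly.ne_zero hT)⟩, ?_⟩
    apply (AEval'.of T).symm.injective
    rw [Submonoid.smul_def, AEval.of_symm_smul]
    simp [minpoly.aeval]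
  obtain ⟨ι, hι, p, hp, e, ⟨F⟩⟩ := Module.equiv_directSum_of_isTorsion htor
  haveI := hι
  set Q : ι → Type _ := fun i => ℂ[X] ⧸ (ℂ[X] ∙ p i ^ e i) with hQ
  let G : Module.AEval' T ≃ₗ[ℂ[X]] (∀ i, Q i) :=
    F.trans (DirectSum.linearEquivFunOnFintype ℂ[X] ι Q)
  -- canonical elements
  let can : (∀ i, Fin (e i + 1)) → (∀ i, Q i) :=
    fun a i => Ideal.Quotient.mk (ℂ[X] ∙ p i ^ e i) (p i ^ (a i : ℕ))
  let vcan : (∀ i, Fin (e i + 1)) → V := fun a => (AEval'.of T).symm (G.symm (can a))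
  apply Set.Finite.subset (Set.finite_range fun a => centOrbit T (vcan a))
  rintro s ⟨v, rfl⟩
  -- decompose G (of v) componentwise
  obtain ⟨a, u, hau⟩ : ∃ (a : ∀ i, Fin (e i + 1)) (u : ∀ i, (Q i)ˣ),
      G ((AEval'.of T) v) = fun i => (u i : Q i) * can a i := by
    have h := fun i => quotPow_exists_unit (hp i) (e i) (G ((AEval'.of T) v) i)
    choose a u ha hx using h
    exact ⟨fun i => ⟨a i, Nat.lt_succ_of_le (ha i)⟩, u, funext fun i => hx i⟩
  -- the diagonal automorphism
  let φ : (∀ i, Q i) ≃ₗ[ℂ[X]] (∀ i, Q i) :=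
    LinearEquiv.piCongrRight fun i => unitMulEquiv (u i)
  have hφ : φ (can a) = G ((AEval'.of T) v) := by
    rw [hau]; rfl
  let ψ : Module.AEval' T ≃ₗ[ℂ[X]] Module.AEval' T := G.trans (φ.trans G.symm)
  -- ψ as a ℂ-linear automorphism of V
  let S : V ≃ₗ[ℂ] V :=
    (AEval'.of T).trans ((ψ.restrictScalars ℂ).trans (AEval'.of T).symm)
  have hST : ∀ x : V, S (T x) = T (S x) := by
    intro x
    show (AEval'.of T).symm (ψ ((AEval'.of T) (T x))) = T ((AEval'.of T).symm (ψ ((AEval'.of T) x)))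
    rw [← AEval'.X_smul_of, map_smul, AEval.of_symm_X_smul]
    rfl
  let U : (Module.End ℂ V)ˣ :=
    ⟨S.toLinearMap, S.symm.toLinearMap,
      by ext x; simp [Module.End.mul_apply], by ext x; simp [Module.End.mul_apply]⟩
  have hUcomm : Commute (U : Module.End ℂ V) T := by
    ext x
    exact hST x
  have hv : v = (U : Module.End ℂ V) (vcan a) := by
    show v = S (vcan a)
    show v = (AEval'.of T).symm (ψ ((AEval'.of T) ((AEval'.of T).symm (G.symm (can a)))))
    rw [LinearEquiv.apply_symm_apply]
    show v = (AEval'.of T).symm (G.symm (φ (G (G.symm (can a)))))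
    rw [LinearEquiv.apply_symm_apply, hφ, LinearEquiv.symm_apply_apply,
      LinearEquiv.symm_apply_apply]
  exact ⟨a, (centOrbit_eq U hUcomm hv).symm⟩
end

section
/- Let V be a finite-dimensional complex vector space, T : V → V a linear operator, and v ∈ V. Then the topological closure of the orbit C(T)v in V (with its standard topology as a finite-dimensional complex vector space) is equal to the set c(T)v = {Sv : S ∈ End(V), ST = TS}, which is a linear subspace of V. -/
/-- The topological closure of the centralizer-group orbit `C(T)v` equals the set
`c(T)v = {S v : S ∈ End(V), ST = TS}`, which is a linear subspace of `V`. -/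
theorem stmt3 (V : Type*) [NormedAddCommGroup V] [NormedSpace ℂ V] [FiniteDimensional ℂ V]
    (T : Module.End ℂ V) (v : V) :
    closure (centOrbit T v) = {w | ∃ S : Module.End ℂ V, Commute S T ∧ w = S v} ∧
    ∃ W : Submodule ℂ V, (W : Set V) = {w | ∃ S : Module.End ℂ V, Commute S T ∧ w = S v} := by
  -- The target set as a submodule: image of the centralizer subalgebra under evaluation at `v`.
  set A : Subalgebra ℂ (Module.End ℂ V) := Subalgebra.centralizer ℂ {T} with hA
  set W : Submodule ℂ V :=
    (Subalgebra.toSubmodule A).map (LinearMap.applyₗ (R := ℂ) (M := V) v) with hW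
  have hWset : (W : Set V) = {w | ∃ S : Module.End ℂ V, Commute S T ∧ w = S v} := by
    ext w
    simp only [hW, Submodule.mem_map, Subalgebra.mem_toSubmodule, Set.mem_setOf_eq,
      LinearMap.applyₗ_apply_apply, hA, Subalgebra.mem_centralizer_iff]
    constructor
    · rintro ⟨S, hS, rfl⟩
      exact ⟨S, (hS T rfl).symm, rfl⟩
    · rintro ⟨S, hS, rfl⟩
      exact ⟨S, fun g hg => hg ▸ hS.symm, rfl⟩
  refine ⟨?_, W, hWset⟩
  apply le_antisymm
  · -- closure ⊆ c(T)v : the orbit is contained in the closed set W.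
    rw [← hWset]
    refine closure_minimal ?_ W.closed_of_finiteDimensional
    rintro w ⟨U, hU, rfl⟩
    rw [hWset]
    exact ⟨U, hU, rfl⟩
  · rintro w ⟨S, hST, rfl⟩
    -- approximate S by S + ε • 1 for ε avoiding the (finite) spectrum of -S.
    have hfin : (spectrum ℂ (-S)).Finite := Module.End.finite_spectrum _
    have hdense : Dense (spectrum ℂ (-S))ᶜ := hfin.countable.dense_compl ℂ
    have hne : Filter.NeBot (nhdsWithin (0 : ℂ) (spectrum ℂ (-S))ᶜ) :=
      mem_closure_iff_nhdsWithin_neBot.mp (hdense 0)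
    have htend : Filter.Tendsto (fun ε : ℂ => S v + ε • v)
        (nhdsWithin (0 : ℂ) (spectrum ℂ (-S))ᶜ) (nhds (S v)) := by
      have : Filter.Tendsto (fun ε : ℂ => S v + ε • v) (nhds 0) (nhds (S v + (0 : ℂ) • v)) := by
        exact (tendsto_const_nhds.add ((continuous_id.smul continuous_const).tendsto 0))
      simpa using this.mono_left nhdsWithin_le_nhds
    refine mem_closure_of_tendsto htend ?_
    filter_upwards [self_mem_nhdsWithin] with ε (hε : ε ∉ spectrum ℂ (-S))
    rw [spectrum.notMem_iff] at hε
    have heq : algebraMap ℂ (Module.End ℂ V) ε - (-S) = S + ε • 1 := by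
      rw [Algebra.algebraMap_eq_smul_one, sub_neg_eq_add, add_comm]
    rw [heq] at hε
    obtain ⟨U, hUe⟩ := hε
    refine ⟨U, ?_, ?_⟩
    · rw [hUe]
      exact hST.add_left ((Commute.one_left T).smul_left ε)
    · rw [hUe]
      simp [LinearMap.add_apply, LinearMap.smul_apply]
end

section
/- Let V be a finite-dimensional complex vector space of dimension n and T : V → V a linear operator. For each eigenvalue λ of T, let V_λ = ker (T − λ)^n denote the generalized eigenspace. Then every linear operator S commuting with T maps each V_λ into itself, and the map S ↦ (S|_{V_λ})_{λ ∈ Spec(T)} is an algebra isomorphism from the centralizer algebra c(T) onto the product ∏_{λ ∈ Spec(T)} c(T|_{V_λ}) of the centralizer algebras of the restrictions T|_{V_λ} ∈ End(V_λ). -/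
/-!
Every operator commuting with `T` commutes with the powers of `T - μ`, hence preserves their
kernels, the generalized eigenspaces. Over `ℂ` these form an internal direct sum decomposition
of `V`, so an operator preserving them is determined by its restrictions, and any family of
operators on the summands glues to one on `V`. Commutation with `T` can be checked summand by
summand, so restriction is a bijection between the centralizers, and it is clearly an algebra
homomorphism.
-/

namespace DirectSum.IsInternal

variable {ι R M : Type*} [DecidableEq ι] [CommSemiring R] [AddCommMonoid M] [Module R M]
  {N : ι → Submodule R M}

theorem linearMap_ext {M' : Type*} [AddCommMonoid M'] [Module R M'] (h : IsInternal N)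
    {f g : M →ₗ[R] M'} (hfg : ∀ i, ∀ x ∈ N i, f x = g x) : f = g := by
  ext x
  obtain ⟨y, rfl⟩ := h.2 x
  have hcomp : f ∘ₗ coeLinearMap N = g ∘ₗ coeLinearMap N :=
    DirectSum.linearMap_ext R fun i => LinearMap.ext fun x => by
      simpa [lof_eq_of, coeLinearMap_of] using hfg i x x.2
  exact LinearMap.congr_fun hcomp y

noncomputable def endOfPi (h : IsInternal N) (f : ∀ i, Module.End R (N i)) : Module.End R M :=
  toModule R ι M (fun i => (N i).subtype ∘ₗ f i) ∘ₗ
    (LinearEquiv.ofBijective (coeLinearMap N) h).symm.toLinearMap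

theorem endOfPi_apply_of_mem (h : IsInternal N) (f : ∀ i, Module.End R (N i)) {i : ι} {x : M}
    (hx : x ∈ N i) : h.endOfPi f x = f i ⟨x, hx⟩ := by
  have hsymm : (LinearEquiv.ofBijective (coeLinearMap N) h).symm x =
      lof R ι (fun i => N i) i ⟨x, hx⟩ :=
    (LinearEquiv.symm_apply_eq _).mpr (coeLinearMap_of N i ⟨x, hx⟩).symm
  simp [endOfPi, hsymm]

end DirectSum.IsInternal

namespace Subalgebra

theorem mem_centralizer_singleton_iff {R A : Type*} [CommSemiring R] [Semiring A] [Algebra R A]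
    {a b : A} : b ∈ centralizer R {a} ↔ Commute b a := by
  simp only [mem_centralizer_iff, Set.mem_singleton_iff, forall_eq]
  exact eq_comm

variable {ι R M : Type*} [CommSemiring R] [AddCommMonoid M] [Module R M]
  {N : ι → Submodule R M} {T : Module.End R M}
  (hT : ∀ i, ∀ x ∈ N i, T x ∈ N i)
  (hN : ∀ S : Module.End R M, Commute S T → ∀ i, ∀ x ∈ N i, S x ∈ N i)

noncomputable def centralizerRestrictPi :
    centralizer R {T} →ₐ[R] Π i, centralizer R {T.restrict (hT i)} where
  toFun S i :=
    ⟨(S : Module.End R M).restrict (hN S (mem_centralizer_singleton_iff.1 S.2) i),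
      mem_centralizer_singleton_iff.2 <|
        LinearMap.restrict_commute (mem_centralizer_singleton_iff.1 S.2) _ _⟩
  map_one' := rfl
  map_mul' _ _ := rfl
  map_zero' := rfl
  map_add' _ _ := rfl
  commutes' _ := rfl

variable [DecidableEq ι]

theorem centralizerRestrictPi_injective (h : DirectSum.IsInternal N) :
    Function.Injective (centralizerRestrictPi hT hN) := by
  intro S₁ S₂ hS
  refine Subtype.ext <| h.linearMap_ext fun i x hx => ?_
  exact congr_arg (fun F => ((F i : Module.End R (N i)) ⟨x, hx⟩ : M)) hS

theorem centralizerRestrictPi_surjective (h : DirectSum.IsInternal N) :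
    Function.Surjective (centralizerRestrictPi hT hN) := by
  intro F
  have hF (i) (x : M) (hx : x ∈ N i) :
      h.endOfPi (fun i => F i) x = (F i : Module.End R (N i)) ⟨x, hx⟩ :=
    h.endOfPi_apply_of_mem _ hx
  have hcomm : Commute (h.endOfPi fun i => F i) T := h.linearMap_ext fun i x hx => by
    have hFi := LinearMap.congr_fun (mem_centralizer_singleton_iff.1 (F i).2) ⟨x, hx⟩
    simp only [Module.End.mul_apply, hF i x hx, hF i (T x) (hT i x hx)]
    exact congr_arg Subtype.val hFi
  refine ⟨⟨_, mem_centralizer_singleton_iff.2 hcomm⟩, funext fun i => ?_⟩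
  exact Subtype.ext <| LinearMap.ext fun x => Subtype.ext <| hF i x x.2

noncomputable def centralizerEquivPi (h : DirectSum.IsInternal N) :
    centralizer R {T} ≃ₐ[R] Π i, centralizer R {T.restrict (hT i)} :=
  AlgEquiv.ofBijective (centralizerRestrictPi hT hN)
    ⟨centralizerRestrictPi_injective hT hN h, centralizerRestrictPi_surjective hT hN h⟩

end Subalgebra

namespace Module.End

variable {K V : Type*} [Field K] [AddCommGroup V] [Module K V]

theorem maxGenEigenspace_eq_bot_of_not_hasEigenvalue {T : End K V} {μ : K}
    (hμ : ¬ T.HasEigenvalue μ) : T.maxGenEigenspace μ = ⊥ :=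
  not_not.1 fun h => hμ (HasUnifEigenvalue.lt zero_lt_one h)

theorem isInternal_maxGenEigenspace_hasEigenvalue [DecidableEq K] [IsAlgClosed K]
    [FiniteDimensional K V] (T : End K V) :
    DirectSum.IsInternal fun μ : {μ // T.HasEigenvalue μ} => T.maxGenEigenspace μ := by
  refine DirectSum.isInternal_submodule_of_iSupIndep_of_iSup_eq_top
    (T.independent_maxGenEigenspace.comp Subtype.val_injective) (eq_top_iff.2 ?_)
  rw [← T.iSup_maxGenEigenspace_eq_top]
  refine iSup_le fun μ => ?_
  by_cases hμ : T.HasEigenvalue μ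
  · exact le_iSup (fun μ : {μ // T.HasEigenvalue μ} => T.maxGenEigenspace μ) ⟨μ, hμ⟩
  · simp [maxGenEigenspace_eq_bot_of_not_hasEigenvalue hμ]

end Module.End

/-- The centralizer algebra `c(T)` decomposes as the product of the centralizer algebras of
the restrictions of `T` to the generalized eigenspaces `V_λ = ker (T - λ)^n`, `n = dim V`:
every operator commuting with `T` preserves each generalized eigenspace, and restriction
gives an algebra isomorphism `c(T) ≃ ∏_{λ ∈ Spec(T)} c(T|_{V_λ})`. -/
theorem stmt7 (V : Type*) [AddCommGroup V] [Module ℂ V] [FiniteDimensional ℂ V]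
    (T : Module.End ℂ V)
    (G : ℂ → Submodule ℂ V)
    (hG : ∀ μ : ℂ, G μ = LinearMap.ker ((T - μ • 1) ^ Module.finrank ℂ V))
    (hT : ∀ μ : ℂ, ∀ v ∈ G μ, T v ∈ G μ) :
    (∀ S : Module.End ℂ V, Commute S T → ∀ μ : ℂ, ∀ v ∈ G μ, S v ∈ G μ) ∧
    ∃ e : Subalgebra.centralizer ℂ {T} ≃ₐ[ℂ]
        (Π μ : {μ : ℂ // Module.End.HasEigenvalue T μ},
          Subalgebra.centralizer ℂ
            ({LinearMap.restrict T (hT μ.1)} : Set (Module.End ℂ (G μ.1)))),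
      ∀ (S : Subalgebra.centralizer ℂ ({T} : Set (Module.End ℂ V)))
        (μ : {μ : ℂ // Module.End.HasEigenvalue T μ}) (v : G μ.1),
        ((e S μ : Module.End ℂ (G μ.1)) v : V) = (S : Module.End ℂ V) (v : V) := by
  classical
  obtain rfl : G = T.maxGenEigenspace := funext fun μ => by
    rw [hG, Module.End.maxGenEigenspace_eq_genEigenspace_finrank, Module.End.genEigenspace_nat]
  have hS : ∀ S : Module.End ℂ V, Commute S T → ∀ μ : ℂ, ∀ v ∈ T.maxGenEigenspace μ,
      S v ∈ T.maxGenEigenspace μ := fun S hST μ _ hv =>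
    T.mapsTo_maxGenEigenspace_of_comm hST.symm μ hv
  exact ⟨hS, Subalgebra.centralizerEquivPi
    (N := fun μ : {μ // T.HasEigenvalue μ} => T.maxGenEigenspace μ)
    (fun μ => hT μ.1) (fun S hST μ => hS S hST μ.1) T.isInternal_maxGenEigenspace_hasEigenvalue,
    fun _ _ _ => rfl⟩
end

section
/- Let λ ∈ ℂ, p = x − λ ∈ ℂ[x], ι a finite index set, d : ι → ℕ with d(j) ≥ 1 for all j, and let V = ⨁_{j ∈ ι} ℂ[x]/(p^{d(j)}) as a ℂ[x]-module (so that the operator T given by multiplication by x has, for eigenvalue λ, Jordan blocks of sizes d(j)). Then a ℂ-subspace W ⊆ V is invariant under every ℂ[x]-module endomorphism of V if and only if there exists c : ι → ℕ with c(j) ≤ d(j) for all j such that: (1) W = ⨁_{j ∈ ι} p^{d(j)−c(j)}·(ℂ[x]/(p^{d(j)})), the direct sum of the submodules of each cyclic summand generated by the class of p^{d(j)−c(j)}; and (2) for all j, j' ∈ ι with d(j) ≤ d(j'), both c(j) ≤ c(j') and d(j) − c(j) ≤ d(j') − c(j'). -/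
open Polynomial DirectSum

/-!
A fully invariant subspace `W` is a `ℂ[x]`-submodule, because multiplication by `x` is an
endomorphism. It is stable under the projections onto the summands, so it is the direct sum of
the submodules `N j` of the cyclic summands `Mⱼ = ℂ[x]/(p^{d j})` that it contains, and
full invariance says exactly that every `Mⱼ → Mⱼ'` maps `N j` into `N j'`. Since `ℂ[x]` is a
PID, `N j = p^{e j} Mⱼ` for some `e j ≤ d j`. A homomorphism `M_a → M_b` is multiplication by
some `r` with `p^{b - a} ∣ r` (truncated subtraction). So `p^e M_a` is mapped into `p^{e'} M_b`
by all of them iff `e' ≤ e + (b - a)`, the extreme case being multiplication by `p^{b - a}`.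
For the two orders of a pair `j, j'` this is condition (2), with `c = d - e`.
-/

namespace DirectSum

variable {R ι : Type*} [Semiring R] [DecidableEq ι] {M : ι → Type*}
  [∀ j, AddCommMonoid (M j)] [∀ j, Module R (M j)]

theorem isFullyInvariant_iff_exists_eq_iSup_map_lof (W : Submodule R (⨁ j, M j)) :
    W.IsFullyInvariant ↔ ∃ N : ∀ j, Submodule R (M j),
      (∀ j j' (f : M j →ₗ[R] M j'), N j ≤ (N j').comap f) ∧
        W = ⨆ j, (N j).map (lof R ι M j) := by
  classical
  constructor
  · intro hW
    refine ⟨fun j => W.comap (lof R ι M j), fun j j' f x hx => ?_, le_antisymm ?_ ?_⟩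
    · simpa using hW (lof R ι M j' ∘ₗ f ∘ₗ component R ι M j) hx
    · intro w hw
      rw [← sum_support_of w]
      refine Submodule.sum_mem _ fun j _ => Submodule.mem_iSup_of_mem j ⟨w j, ?_, rfl⟩
      exact hW (lof R ι M j ∘ₗ component R ι M j) hw
    · exact iSup_le fun j => Submodule.map_comap_le _ _
  · rintro ⟨N, hN, rfl⟩ φ
    refine iSup_le fun j => ?_
    rintro _ ⟨x, hx, rfl⟩
    rw [Submodule.mem_comap, ← sum_support_of (φ (lof R ι M j x))]
    refine Submodule.sum_mem _ fun j' _ => Submodule.mem_iSup_of_mem j' ⟨_, ?_, rfl⟩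
    exact hN j j' (component R ι M j' ∘ₗ φ ∘ₗ lof R ι M j) hx

end DirectSum

namespace Ideal.Quotient

variable {R : Type*} [CommRing R]

theorem smul_mk (I : Ideal R) (r q : R) : r • mk I q = mk I (r * q) := by
  rw [Algebra.smul_def, algebraMap_eq, map_mul]

theorem mk_mem_span_singleton_mk_iff {a b : R} (hba : b ∣ a) (q : R) :
    mk (span {a}) q ∈ Submodule.span R {mk (span {a}) b} ↔ b ∣ q := by
  rw [Submodule.mem_span_singleton]
  simp only [smul_mk, Ideal.Quotient.eq, mem_span_singleton]
  constructor
  · rintro ⟨r, hr⟩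
    exact (dvd_sub_right (dvd_mul_left b r)).mp (hba.trans hr)
  · rintro ⟨t, rfl⟩
    exact ⟨t, by rw [mul_comm, sub_self]; exact dvd_zero a⟩

theorem exists_mul_of_linearMap {a b : R} (f : R ⧸ span {a} →ₗ[R] R ⧸ span {b}) :
    ∃ r, b ∣ a * r ∧ ∀ q, f (mk _ q) = mk _ (q * r) := by
  obtain ⟨r, hr⟩ := mk_surjective (f (mk _ 1))
  have hf (q : R) : f (mk _ q) = mk _ (q * r) := by
    rw [← smul_mk, hr, ← map_smul, smul_mk, mul_one]
  refine ⟨r, ?_, hf⟩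
  rw [← mem_span_singleton, ← eq_zero_iff_mem, ← hf,
    eq_zero_iff_mem.mpr (mem_span_singleton_self a), map_zero]

theorem exists_linearMap_mk_eq_mk_mul {a b c : R} (h : b ∣ a * c) :
    ∃ f : R ⧸ span {a} →ₗ[R] R ⧸ span {b}, ∀ q, f (mk _ q) = mk _ (q * c) := by
  refine ⟨Submodule.mapQ _ _ (LinearMap.mulRight R c) ?_, fun q => rfl⟩
  rw [Submodule.span_singleton_le_iff_mem]
  exact mem_span_singleton.mpr h

theorem exists_eq_span_mk_pow [IsDomain R] [IsPrincipalIdealRing R] {p : R} (hp : Prime p)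
    (d : ℕ) (N : Submodule R (R ⧸ span {p ^ d})) :
    ∃ e ≤ d, N = Submodule.span R {mk (span {p ^ d}) (p ^ e)} := by
  obtain ⟨g, hg⟩ := (IsPrincipalIdealRing.principal (N.comap (Submodule.mkQ _))).principal
  have hgd : g ∣ p ^ d := by
    have hpd : p ^ d ∈ N.comap (Submodule.mkQ _) := by simp
    rw [hg] at hpd
    exact mem_span_singleton.mp hpd
  obtain ⟨e, he, hge⟩ := (dvd_prime_pow hp d).mp hgd
  have hN : N.comap (Submodule.mkQ _) = Submodule.span R {p ^ e} :=
    hg.trans (span_singleton_eq_span_singleton.mpr hge)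
  refine ⟨e, he, ?_⟩
  rw [← Submodule.map_comap_eq_of_surjective (Submodule.mkQ_surjective _) N, hN,
    Submodule.map_span, Set.image_singleton]
  rfl

theorem forall_span_mk_pow_le_comap_iff [IsDomain R] {p : R} (hp : Prime p) {a b e e' : ℕ}
    (he' : e' ≤ b) :
    (∀ f : R ⧸ span {p ^ a} →ₗ[R] R ⧸ span {p ^ b},
      Submodule.span R {mk (span {p ^ a}) (p ^ e)} ≤
        (Submodule.span R {mk (span {p ^ b}) (p ^ e')}).comap f) ↔
    e' ≤ e + (b - a) := by
  simp only [Submodule.span_singleton_le_iff_mem, Submodule.mem_comap]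
  have hpow_dvd_pow {m n : ℕ} : p ^ m ∣ p ^ n ↔ m ≤ n :=
    pow_dvd_pow_iff hp.ne_zero hp.not_isUnit
  constructor
  · intro h
    obtain ⟨f, hf⟩ := exists_linearMap_mk_eq_mk_mul (a := p ^ a) (b := p ^ b) (c := p ^ (b - a))
      (by rw [← pow_add, hpow_dvd_pow]; omega)
    have hfe := h f
    rwa [hf, mk_mem_span_singleton_mk_iff (hpow_dvd_pow.mpr he'), ← pow_add,
      hpow_dvd_pow] at hfe
  · intro h f
    obtain ⟨r, hr, hf⟩ := exists_mul_of_linearMap f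
    have hr' : p ^ (b - a) ∣ r := by
      rcases le_total a b with hab | hab
      · rw [← Nat.add_sub_cancel' hab, pow_add] at hr
        exact (mul_dvd_mul_iff_left (pow_ne_zero a hp.ne_zero)).mp hr
      · simp [Nat.sub_eq_zero_of_le hab]
    rw [hf, mk_mem_span_singleton_mk_iff (hpow_dvd_pow.mpr he')]
    exact (hpow_dvd_pow.mpr h).trans (pow_add p e (b - a) ▸ mul_dvd_mul_left _ hr')

end Ideal.Quotient

theorem forall_sub_le_sub_add_sub_iff {ι : Type*} {c d : ι → ℕ} (hc : ∀ j, c j ≤ d j) :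
    (∀ j j', d j' - c j' ≤ d j - c j + (d j' - d j)) ↔
      ∀ j j', d j ≤ d j' → c j ≤ c j' ∧ d j - c j ≤ d j' - c j' := by
  constructor
  · intro h j j' hjj'
    have := h j j'
    have := h j' j
    have := hc j
    have := hc j'
    omega
  · intro h j j'
    have := hc j
    have := hc j'
    rcases le_total (d j) (d j') with hjj' | hjj'
    · have := h j j' hjj'
      omega
    · have := h j' j hjj'
      omega

open Ideal.Quotient in
theorem isFullyInvariant_iff_exists_eq_iSup_span_mk_pow {R ι : Type*} [CommRing R] [IsDomain R]
    [IsPrincipalIdealRing R] [DecidableEq ι] {p : R} (hp : Prime p) (d : ι → ℕ)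
    (W : Submodule R (⨁ j, R ⧸ Ideal.span {p ^ d j})) :
    W.IsFullyInvariant ↔ ∃ c : ι → ℕ, (∀ j, c j ≤ d j) ∧
      (∀ j j', d j ≤ d j' → c j ≤ c j' ∧ d j - c j ≤ d j' - c j') ∧
      W = ⨆ j, (Submodule.span R {mk (Ideal.span {p ^ d j}) (p ^ (d j - c j))}).map
        (lof R ι (fun j => R ⧸ Ideal.span {p ^ d j}) j) := by
  have hcompat (c : ι → ℕ) (hc : ∀ j, c j ≤ d j) :
      (∀ j j' (f : R ⧸ Ideal.span {p ^ d j} →ₗ[R] R ⧸ Ideal.span {p ^ d j'}),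
        Submodule.span R {mk (Ideal.span {p ^ d j}) (p ^ (d j - c j))} ≤
          (Submodule.span R {mk (Ideal.span {p ^ d j'}) (p ^ (d j' - c j'))}).comap f) ↔
      ∀ j j', d j ≤ d j' → c j ≤ c j' ∧ d j - c j ≤ d j' - c j' := by
    simp only [forall_span_mk_pow_le_comap_iff hp (Nat.sub_le _ _)]
    exact forall_sub_le_sub_add_sub_iff hc
  rw [DirectSum.isFullyInvariant_iff_exists_eq_iSup_map_lof]
  constructor
  · rintro ⟨N, hN, rfl⟩
    choose e he hNe using fun j => exists_eq_span_mk_pow hp (d j) (N j)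
    have hc (j : ι) : d j - e j ≤ d j := Nat.sub_le _ _
    obtain rfl : N = fun j =>
        Submodule.span R {mk (Ideal.span {p ^ d j}) (p ^ (d j - (d j - e j)))} := by
      funext j
      rw [hNe j, Nat.sub_sub_self (he j)]
    exact ⟨fun j => d j - e j, hc, (hcompat _ hc).mp hN, rfl⟩
  · rintro ⟨c, hc, hcd, rfl⟩
    exact ⟨_, (hcompat c hc).mpr hcd, rfl⟩

theorem Submodule.forall_end_mem_iff_exists_isFullyInvariant {K R M : Type*} [Semiring K]
    [CommSemiring R] [AddCommMonoid M] [Module R M] [Module K M] [SMul K R]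
    [IsScalarTower K R M] (W : Submodule K M) :
    (∀ φ : Module.End R M, ∀ w ∈ W, φ w ∈ W) ↔
      ∃ W' : Submodule R M, W'.IsFullyInvariant ∧ W = W'.restrictScalars K := by
  constructor
  · intro h
    exact ⟨{ W with smul_mem' := fun r v hv => h (r • LinearMap.id) v hv },
      fun φ w hw => h φ w hw, rfl⟩
  · rintro ⟨W', hW', rfl⟩ φ w hw
    exact hW' φ hw

theorem stmt9_general (lam : ℂ) (ι : Type*) [DecidableEq ι]
    (d : ι → ℕ)
    (W : Submodule ℂ (⨁ j : ι, Polynomial ℂ ⧸ Ideal.span {(X - C lam) ^ d j})) :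
    (∀ φ : (⨁ j : ι, Polynomial ℂ ⧸ Ideal.span {(X - C lam) ^ d j}) →ₗ[Polynomial ℂ]
        (⨁ j : ι, Polynomial ℂ ⧸ Ideal.span {(X - C lam) ^ d j}),
      ∀ w ∈ W, φ w ∈ W) ↔
    ∃ c : ι → ℕ, (∀ j, c j ≤ d j) ∧
      (∀ j j', d j ≤ d j' → c j ≤ c j' ∧ d j - c j ≤ d j' - c j') ∧
      W = ⨆ j : ι, Submodule.map
        (LinearMap.restrictScalars ℂ
          (DirectSum.lof (Polynomial ℂ) ι
            (fun j => Polynomial ℂ ⧸ Ideal.span {(X - C lam) ^ d j}) j))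
        ((Submodule.span (Polynomial ℂ)
          {Ideal.Quotient.mk (Ideal.span {(X - C lam) ^ d j})
            ((X - C lam) ^ (d j - c j))}).restrictScalars ℂ) := by
  simp only [← Submodule.restrictScalars_map, ← Submodule.restrictScalars_iSup,
    Submodule.forall_end_mem_iff_exists_isFullyInvariant,
    isFullyInvariant_iff_exists_eq_iSup_span_mk_pow (prime_X_sub_C lam)]
  constructor
  · rintro ⟨_, ⟨c, hc, hcd, rfl⟩, rfl⟩
    exact ⟨c, hc, hcd, rfl⟩
  · rintro ⟨c, hc, hcd, rfl⟩
    exact ⟨_, ⟨c, hc, hcd, rfl⟩, rfl⟩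

/-- For `V = ⨁_j ℂ[x]/(p^{d j})` with `p = x - λ`, a `ℂ`-subspace `W ⊆ V` is invariant under
every `ℂ[x]`-module endomorphism of `V` if and only if there is `c : ι → ℕ`, `c j ≤ d j`,
such that (1) `W` is the direct sum over `j` of the submodules `p^{d j - c j}·(ℂ[x]/(p^{d j}))`
of the cyclic summands, and (2) whenever `d j ≤ d j'` one has `c j ≤ c j'` and
`d j - c j ≤ d j' - c j'`. -/
theorem stmt9 (lam : ℂ) (ι : Type*) [Fintype ι] [DecidableEq ι]
    (d : ι → ℕ) (hd : ∀ j, 1 ≤ d j)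
    (W : Submodule ℂ (⨁ j : ι, Polynomial ℂ ⧸ Ideal.span {(X - C lam) ^ d j})) :
    (∀ φ : (⨁ j : ι, Polynomial ℂ ⧸ Ideal.span {(X - C lam) ^ d j}) →ₗ[Polynomial ℂ]
        (⨁ j : ι, Polynomial ℂ ⧸ Ideal.span {(X - C lam) ^ d j}),
      ∀ w ∈ W, φ w ∈ W) ↔
    ∃ c : ι → ℕ, (∀ j, c j ≤ d j) ∧
      (∀ j j', d j ≤ d j' → c j ≤ c j' ∧ d j - c j ≤ d j' - c j') ∧
      W = ⨆ j : ι, Submodule.map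
        (LinearMap.restrictScalars ℂ
          (DirectSum.lof (Polynomial ℂ) ι
            (fun j => Polynomial ℂ ⧸ Ideal.span {(X - C lam) ^ d j}) j))
        ((Submodule.span (Polynomial ℂ)
          {Ideal.Quotient.mk (Ideal.span {(X - C lam) ^ d j})
            ((X - C lam) ^ (d j - c j))}).restrictScalars ℂ) :=
  stmt9_general lam ι d W
end

section
/- Let λ ∈ ℂ, p = x − λ ∈ ℂ[x], ι a finite index set, d : ι → ℕ with d(j) ≥ 1 for all j, and V = ⨁_{j ∈ ι} ℂ[x]/(p^{d(j)}). Let B = {i_1 < i_2 < ⋯ < i_m} be the set of distinct values of d. Define the poset P_B on the set {(k, l) : 1 ≤ k ≤ m, 1 ≤ l ≤ i_k} by declaring (k', l') ≤ (k, l) if and only if l' ≤ l and i_{k'} − l' ≥ i_k − l. Then the lattice of fully invariant subspaces of V, ordered by inclusion (with joins given by sums and meets by intersections), is isomorphic as a lattice to the lattice of decreasing subsets (lower sets) of P_B, ordered by inclusion. -/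
set_option synthInstance.maxHeartbeats 1000000
set_option maxHeartbeats 1000000
set_option linter.unusedSectionVars false
set_option linter.unusedVariables false

open Polynomial DirectSum

/-- The Gelfand–Tsetlin-type poset `P_B` on pairs `(k, l)` with `1 ≤ l ≤ i k`,
where `(k', l') ≤ (k, l)` iff `l' ≤ l` and `i k' - l' ≥ i k - l`. -/
def GTPoset (m : ℕ) (i : Fin m → ℕ) : Type := {x : Fin m × ℕ // 1 ≤ x.2 ∧ x.2 ≤ i x.1}

instance (m : ℕ) (i : Fin m → ℕ) : Preorder (GTPoset m i) where
  le a b := a.val.2 ≤ b.val.2 ∧ i b.val.1 - b.val.2 ≤ i a.val.1 - a.val.2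
  le_refl a := ⟨le_refl _, le_refl _⟩
  le_trans a b c hab hbc := ⟨hab.1.trans hbc.1, hbc.2.trans hab.2⟩

/-- A subspace `W` of `V = ⨁_j ℂ[x]/(p^{d j})` is fully invariant if it is preserved by
every `ℂ[x]`-module endomorphism of `V`. -/
def FullyInv (lam : ℂ) (ι : Type*) [DecidableEq ι] (d : ι → ℕ)
    (W : Submodule ℂ (⨁ j : ι, Polynomial ℂ ⧸ Ideal.span {(X - C lam) ^ d j})) : Prop :=
  ∀ φ : (⨁ j : ι, Polynomial ℂ ⧸ Ideal.span {(X - C lam) ^ d j}) →ₗ[Polynomial ℂ]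
      (⨁ j : ι, Polynomial ℂ ⧸ Ideal.span {(X - C lam) ^ d j}),
    ∀ w ∈ W, φ w ∈ W

namespace StmtAux

variable (lam : ℂ) {ι : Type*} [Fintype ι] [DecidableEq ι] (d : ι → ℕ)

local notation "R" => Polynomial ℂ
local notation "pp" => (X - C lam : Polynomial ℂ)

abbrev Vb (j : ι) : Type _ := Polynomial ℂ ⧸ Ideal.span {(X - C lam) ^ d j}

abbrev VV : Type _ := ⨁ j : ι, Vb lam d j

/-- quotient map as an `R`-linear map -/
noncomputable def mkq (j : ι) : R →ₗ[R] Vb lam d j :=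
  (Ideal.span {(X - C lam) ^ d j} : Ideal R).mkQ

lemma mkq_surjective (j : ι) : Function.Surjective (mkq lam d j) :=
  Submodule.mkQ_surjective _

lemma mkq_eq_zero {j : ι} {r : R} : mkq lam d j r = 0 ↔ pp ^ d j ∣ r := by
  rw [mkq, Submodule.mkQ_apply, Submodule.Quotient.mk_eq_zero, Ideal.mem_span_singleton]

lemma mkq_eq_iff {j : ι} {r s : R} : mkq lam d j r = mkq lam d j s ↔ pp ^ d j ∣ r - s := by
  constructor
  · intro h
    rw [← mkq_eq_zero lam d (r := r - s)]
    simp [map_sub, h]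
  · intro h
    have : mkq lam d j (r - s) = 0 := (mkq_eq_zero lam d).2 h
    rw [map_sub, sub_eq_zero] at this
    exact this

/-- "multiplication by q" map between blocks -/
noncomputable def blockHom (j j' : ι) (q : R) (h : pp ^ d j' ∣ pp ^ d j * q) :
    Vb lam d j →ₗ[R] Vb lam d j' := by
  refine Submodule.mapQ _ _ (LinearMap.toSpanSingleton R R q) ?_
  rw [Ideal.span_le]
  rintro r hr
  rw [Set.mem_singleton_iff] at hr
  subst hr
  refine Submodule.mem_comap.mpr ?_
  rw [LinearMap.toSpanSingleton_apply, smul_eq_mul]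
  exact Ideal.mem_span_singleton.mpr h

lemma blockHom_mkq (j j' : ι) (q : R) (h : pp ^ d j' ∣ pp ^ d j * q) (r : R) :
    blockHom lam d j j' q h (mkq lam d j r) = mkq lam d j' (r * q) := by
  rw [mkq, Submodule.mkQ_apply, blockHom, Submodule.mapQ_apply]
  rw [mkq, Submodule.mkQ_apply, LinearMap.toSpanSingleton_apply, smul_eq_mul]

/-- endomorphism of `VV` : project to block j, multiply by q, include in block j' -/
noncomputable def blockEndo (j j' : ι) (q : R) (h : pp ^ d j' ∣ pp ^ d j * q) :
    VV lam d →ₗ[R] VV lam d :=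
  (lof R ι (Vb lam d) j') ∘ₗ (blockHom lam d j j' q h) ∘ₗ (component R ι (Vb lam d) j)

lemma blockEndo_apply (j j' : ι) (q : R) (h : pp ^ d j' ∣ pp ^ d j * q) (v : VV lam d) :
    blockEndo lam d j j' q h v
      = lof R ι (Vb lam d) j' (blockHom lam d j j' q h (component R ι (Vb lam d) j v)) := rfl

end StmtAux

namespace StmtAux

variable (lam : ℂ) {ι : Type*} [Fintype ι] [DecidableEq ι] (d : ι → ℕ)

local notation "R" => Polynomial ℂ
local notation "pp" => (X - C lam : Polynomial ℂ)

lemma pp_prime : Prime pp := prime_X_sub_C lam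

lemma pp_pow_dvd_pow_iff {a b : ℕ} : pp ^ a ∣ pp ^ b ↔ a ≤ b :=
  pow_dvd_pow_iff (pp_prime lam).ne_zero (pp_prime lam).not_unit

lemma smul_mkq {j : ι} (s r : R) : s • mkq lam d j r = mkq lam d j (s * r) := by
  rw [← map_smul, smul_eq_mul]

lemma mem_span_mkq_pow {j : ι} {c a : ℕ} (hca : c ≤ a) (s : R) :
    mkq lam d j (pp ^ a * s) ∈ Submodule.span R {mkq lam d j (pp ^ c)} := by
  rw [Submodule.mem_span_singleton]
  refine ⟨pp ^ (a - c) * s, ?_⟩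
  rw [smul_mkq]
  congr 1
  rw [mul_assoc, mul_comm s, ← mul_assoc, ← pow_add]
  congr 2
  omega

lemma mkq_pow_mem_span_iff {j : ι} {a c : ℕ} (ha : a < d j) :
    mkq lam d j (pp ^ a) ∈ Submodule.span R {mkq lam d j (pp ^ c)} ↔ c ≤ a := by
  constructor
  · intro h
    by_contra hc
    push_neg at hc
    rw [Submodule.mem_span_singleton] at h
    obtain ⟨s, hs⟩ := h
    rw [smul_mkq] at hs
    have hdvd : pp ^ d j ∣ s * pp ^ c - pp ^ a := (mkq_eq_iff lam d).1 hs
    have h1 : pp ^ (a + 1) ∣ s * pp ^ c :=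
      Dvd.dvd.mul_left ((pp_pow_dvd_pow_iff lam).2 (by omega)) s
    have h2 : pp ^ (a + 1) ∣ pp ^ d j := (pp_pow_dvd_pow_iff lam).2 (by omega)
    have : pp ^ (a + 1) ∣ pp ^ a := by
      have := dvd_sub h1 (h2.trans hdvd)
      simpa using this
    have := (pp_pow_dvd_pow_iff lam).1 this
    omega
  · intro h
    simpa using mem_span_mkq_pow lam d h 1

end StmtAux

namespace StmtAux

variable (lam : ℂ) {ι : Type*} [Fintype ι] [DecidableEq ι] (d : ι → ℕ)

local notation "R" => Polynomial ℂ
local notation "pp" => (X - C lam : Polynomial ℂ)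

lemma exists_factor (r : R) (hr : r ≠ 0) :
    ∃ u : R, r = pp ^ (rootMultiplicity lam r) * u ∧ ¬ pp ∣ u := by
  refine ⟨r /ₘ pp ^ (rootMultiplicity lam r), (pow_mul_divByMonic_rootMultiplicity_eq r lam).symm, ?_⟩
  rw [dvd_iff_isRoot]
  exact eval_divByMonic_pow_rootMultiplicity_ne_zero lam hr

lemma exists_inv {u : R} (hu : ¬ pp ∣ u) (n : ℕ) : ∃ b t : R, b * u = 1 + pp ^ n * t := by
  have hcop : IsCoprime pp u := ((pp_prime lam).irreducible.coprime_iff_not_dvd).2 hu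
  obtain ⟨a, b, hab⟩ := (IsCoprime.pow_left (m := n) hcop)
  exact ⟨b, -a, by linear_combination hab⟩

lemma endo_component (φ : VV lam d →ₗ[R] VV lam d) (j' j : ι) :
    ∃ q : R, pp ^ (d j - d j') ∣ q ∧
      ∀ s : R, component R ι (Vb lam d) j (φ (lof R ι (Vb lam d) j' (mkq lam d j' s)))
        = mkq lam d j (s * q) := by
  obtain ⟨r, hr⟩ := mkq_surjective lam d j
    (component R ι (Vb lam d) j (φ (lof R ι (Vb lam d) j' (mkq lam d j' 1))))
  have hz : (pp ^ d j' : R) • (lof R ι (Vb lam d) j' (mkq lam d j' 1)) = 0 := by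
    rw [← map_smul, smul_mkq, mul_one]
    rw [(mkq_eq_zero lam d).2 dvd_rfl, map_zero]
  have hz2 : mkq lam d j (pp ^ d j' * r) = 0 := by
    rw [← smul_mkq, hr, ← map_smul, ← map_smul, hz]
    simp
  have hdvd : pp ^ d j ∣ pp ^ d j' * r := (mkq_eq_zero lam d).1 hz2
  have hq : pp ^ (d j - d j') ∣ r := by
    rcases le_or_gt (d j) (d j') with h | h
    · rw [Nat.sub_eq_zero_of_le h]
      exact one_dvd _
    · have : pp ^ d j' * pp ^ (d j - d j') ∣ pp ^ d j' * r := by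
        rw [← pow_add]
        have : d j' + (d j - d j') = d j := by omega
        rw [this]
        exact hdvd
      exact (mul_dvd_mul_iff_left (pow_ne_zero _ (pp_prime lam).ne_zero)).1 this
  refine ⟨r, hq, fun s => ?_⟩
  have : lof R ι (Vb lam d) j' (mkq lam d j' s) = s • lof R ι (Vb lam d) j' (mkq lam d j' 1) := by
    rw [← map_smul, smul_mkq, mul_one]
  rw [this, map_smul, map_smul, ← hr, smul_mkq, mul_comm]

end StmtAux

namespace StmtAux

section Main

variable (lam : ℂ) {ι : Type*} [Fintype ι] [DecidableEq ι] (d : ι → ℕ)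
  {m : ℕ} (i : Fin m → ℕ)

local notation "R" => Polynomial ℂ
local notation "pp" => (X - C lam : Polynomial ℂ)

variable (hmono : StrictMono i)
  (hrange : ∀ j : ι, ∃ k : Fin m, d j = i k) (hsur : ∀ k : Fin m, ∃ j : ι, d j = i k)

/-- chosen block of size `i k` -/
noncomputable def jk (k : Fin m) : ι := (hsur k).choose

lemma d_jk (k : Fin m) : d (jk d i hsur k) = i k := (hsur k).choose_spec

/-- chosen size index for block `j` -/
noncomputable def kj (j : ι) : Fin m := (hrange j).choose

lemma d_kj (j : ι) : d j = i (kj d i hrange j) := (hrange j).choose_spec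

include hmono in
lemma kj_eq {j : ι} {k : Fin m} (h : d j = i k) : kj d i hrange j = k := by
  have := d_kj d i hrange j
  exact hmono.injective (by rw [← this, ← h])

/-- test elements -/
noncomputable def g (x : GTPoset m i) : VV lam d :=
  lof R ι (Vb lam d) (jk d i hsur x.val.1) (mkq lam d _ (pp ^ (i x.val.1 - x.val.2)))

/-- the set of poset elements whose test vector lies in `W` -/
def SW (W : Submodule ℂ (VV lam d)) : Set (GTPoset m i) :=
  {x | g lam d i hsur x ∈ W}

/-- the largest second coordinate at `k` present in `S` -/
noncomputable def maxl (S : Set (GTPoset m i)) (k : Fin m) : ℕ :=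
  sSup {l : ℕ | ∃ h : 1 ≤ l ∧ l ≤ i k, (⟨(k, l), h⟩ : GTPoset m i) ∈ S}

lemma maxl_le (S : Set (GTPoset m i)) (k : Fin m) : maxl i S k ≤ i k := by
  refine csSup_le' ?_
  rintro l ⟨⟨h1, h2⟩, _⟩
  exact h2

lemma le_maxl {S : Set (GTPoset m i)} {k : Fin m} {l : ℕ} {h : 1 ≤ l ∧ l ≤ i k}
    (hm : (⟨(k, l), h⟩ : GTPoset m i) ∈ S) : l ≤ maxl i S k := by
  refine le_csSup ⟨i k, ?_⟩ ⟨h, hm⟩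
  rintro y ⟨⟨h1, h2⟩, _⟩
  exact h2

lemma maxl_mem {S : Set (GTPoset m i)} {k : Fin m} (h : 1 ≤ maxl i S k) :
    ∃ hh : 1 ≤ maxl i S k ∧ maxl i S k ≤ i k, (⟨(k, maxl i S k), hh⟩ : GTPoset m i) ∈ S := by
  have hne : {l : ℕ | ∃ h : 1 ≤ l ∧ l ≤ i k, (⟨(k, l), h⟩ : GTPoset m i) ∈ S}.Nonempty := by
    by_contra hc
    rw [Set.not_nonempty_iff_eq_empty] at hc
    rw [maxl, hc] at h
    simp at h
  have := Nat.sSup_mem hne ⟨i k, by rintro y ⟨⟨h1, h2⟩, _⟩; exact h2⟩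
  exact this

/-- exponent function of a set -/
noncomputable def eS (S : Set (GTPoset m i)) (k : Fin m) : ℕ := i k - maxl i S k

/-- explicit fully invariant submodule attached to a set of poset elements -/
noncomputable def ES (S : Set (GTPoset m i)) : Submodule ℂ (VV lam d) :=
  ⨅ j : ι, Submodule.comap
    ((component R ι (Vb lam d) j).restrictScalars ℂ)
    ((Submodule.span R {mkq lam d j (pp ^ (eS i S (kj d i hrange j)))}).restrictScalars ℂ)

lemma mem_ES {S : Set (GTPoset m i)} {v : VV lam d} :
    v ∈ ES lam d i hrange S ↔ ∀ j : ι,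
      component R ι (Vb lam d) j v ∈
        Submodule.span R {mkq lam d j (pp ^ (eS i S (kj d i hrange j)))} := by
  simp [ES, Submodule.mem_iInf]

include hmono hsur in
lemma lower_SW {W : Submodule ℂ (VV lam d)} (hW : FullyInv lam ι d W) :
    IsLowerSet (SW lam d i hsur W) := by
  rintro ⟨⟨k, l⟩, hk1, hk2⟩ ⟨⟨k', l'⟩, hk1', hk2'⟩ hba ha
  obtain ⟨hl, hco⟩ := hba
  simp only [SW, Set.mem_setOf_eq] at ha ⊢
  simp only at hl hco
  have hA : l ≤ i k := hk2
  have hB : l' ≤ i k' := hk2'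
  have hC : 1 ≤ l := hk1
  have hD : 1 ≤ l' := hk1'
  have hdvd : pp ^ d (jk d i hsur k') ∣
      pp ^ d (jk d i hsur k) * pp ^ ((i k' - l') - (i k - l)) := by
    rw [d_jk d i hsur, d_jk d i hsur, ← pow_add, pp_pow_dvd_pow_iff]
    omega
  have hthis := hW (blockEndo lam d (jk d i hsur k) (jk d i hsur k') _ hdvd) _ ha
  have heq : blockEndo lam d (jk d i hsur k) (jk d i hsur k') _ hdvd
      (g lam d i hsur ⟨(k, l), hk1, hk2⟩) = g lam d i hsur ⟨(k', l'), hk1', hk2'⟩ := by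
    rw [blockEndo_apply]
    simp only [g]
    rw [component.lof_self, blockHom_mkq]
    congr 2
    rw [← pow_add]
    congr 1
    have hk2a : l ≤ i k := hk2
    have hk2b : l' ≤ i k' := hk2'
    show i k - l + (i k' - l' - (i k - l)) = i k' - l'
    omega
  rw [heq] at hthis
  exact hthis

lemma fullyInv_smul {W : Submodule ℂ (VV lam d)} (hW : FullyInv lam ι d W)
    (r : R) {w : VV lam d} (hw : w ∈ W) : r • w ∈ W := by
  have := hW (r • (LinearMap.id : VV lam d →ₗ[R] VV lam d)) w hw
  simpa using this

include hmono in
lemma W_sub_ES {W : Submodule ℂ (VV lam d)} (hW : FullyInv lam ι d W) :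
    W ≤ ES lam d i hrange (SW lam d i hsur W) := by
  intro w hw
  rw [mem_ES]
  intro j
  obtain ⟨r, hr⟩ := mkq_surjective lam d j (component R ι (Vb lam d) j w)
  by_cases hdvd : pp ^ d j ∣ r
  · rw [← hr, (mkq_eq_zero lam d).2 hdvd]
    exact Submodule.zero_mem _
  have hr0 : r ≠ 0 := by rintro rfl; exact hdvd (dvd_zero _)
  set a := rootMultiplicity lam r with ha
  obtain ⟨u, hu, hpu⟩ := exists_factor lam r hr0
  have hadj : a < d j := by
    by_contra hc
    push_neg at hc
    exact hdvd (dvd_trans ((pp_pow_dvd_pow_iff lam).2 hc) (hu ▸ Dvd.dvd.mul_right (dvd_refl _) u))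
  -- the test element (kj j, i (kj j) - a) belongs to SW W
  set k := kj d i hrange j with hk
  have hdj : d j = i k := d_kj d i hrange j
  obtain ⟨b, t, hbt⟩ := exists_inv lam hpu (d j)
  have hdvd2 : pp ^ d (jk d i hsur k) ∣ pp ^ d j * b := by
    rw [d_jk d i hsur, ← hdj]
    exact Dvd.dvd.mul_right dvd_rfl b
  have hsub : 1 ≤ i k - a ∧ i k - a ≤ i k := by omega
  have hmem : (⟨(k, i k - a), hsub⟩ : GTPoset m i) ∈
      SW lam d i hsur W := by
    have hmem' := hW (blockEndo lam d j (jk d i hsur k) b hdvd2) w hw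
    have heq : blockEndo lam d j (jk d i hsur k) b hdvd2 w
        = g lam d i hsur ⟨(k, i k - a), hsub⟩ := by
      rw [blockEndo_apply, ← hr, blockHom_mkq]
      simp only [g]
      congr 1
      rw [mkq_eq_iff]
      have h3 : r * b - pp ^ (i (k, i k - a).1 - (k, i k - a).2) = pp ^ a * (u * b - 1) := by
        have h1 : i (k, i k - a).1 - (k, i k - a).2 = a := by
          show i k - (i k - a) = a
          omega
        rw [h1, hu, ha]; ring
      rw [h3]
      have h4 : u * b - 1 = pp ^ d j * t := by linear_combination hbt
      rw [h4]
      have h2 : pp ^ a * (pp ^ d j * t) = pp ^ (a + d j) * t := by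
        rw [pow_add]; ring
      rw [h2, d_jk d i hsur, ← hdj]
      exact Dvd.dvd.mul_right ((pp_pow_dvd_pow_iff lam).2 (by omega)) t
    show g lam d i hsur ⟨(k, i k - a), hsub⟩ ∈ W
    rw [← heq]
    exact hmem'
  have hle : i k - a ≤ maxl i (SW lam d i hsur W) k := le_maxl i hmem
  have heS : eS i (SW lam d i hsur W) k ≤ a := by
    have := maxl_le i (SW lam d i hsur W) k
    simp only [eS]
    omega
  rw [← hr, hu]
  exact mem_span_mkq_pow lam d heS u

lemma decomp (v : VV lam d) :
    v = ∑ j ∈ Finset.univ, lof R ι (Vb lam d) j (component R ι (Vb lam d) j v) := by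
  rw [eq_comm]
  exact DirectSum.sum_univ_of v

include hmono in
lemma ES_sub_W {W : Submodule ℂ (VV lam d)} (hW : FullyInv lam ι d W) :
    ES lam d i hrange (SW lam d i hsur W) ≤ W := by
  intro v hv
  rw [mem_ES] at hv
  rw [decomp lam d v]
  refine Submodule.sum_mem _ (fun j _ => ?_)
  set k := kj d i hrange j with hk
  have hdj : d j = i k := d_kj d i hrange j
  obtain ⟨s, hs⟩ := Submodule.mem_span_singleton.1 (hv j)
  rw [smul_mkq] at hs
  by_cases h0 : maxl i (SW lam d i hsur W) k = 0
  · have he : eS i (SW lam d i hsur W) k = i k := by simp [eS, h0]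
    have hz : component R ι (Vb lam d) j v = 0 := by
      rw [← hs, he, mkq_eq_zero, hdj]
      exact Dvd.dvd.mul_left dvd_rfl s
    rw [hz, map_zero]
    exact Submodule.zero_mem _
  · have h1 : 1 ≤ maxl i (SW lam d i hsur W) k := by omega
    obtain ⟨hh, hmm⟩ := maxl_mem i h1
    have hg : g lam d i hsur ⟨(k, maxl i (SW lam d i hsur W) k), hh⟩ ∈ W := hmm
    have hdvd2 : pp ^ d j ∣ pp ^ d (jk d i hsur k) * s := by
      rw [d_jk d i hsur, ← hdj]
      exact Dvd.dvd.mul_right dvd_rfl s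
    have hthis := hW (blockEndo lam d (jk d i hsur k) j s hdvd2) _ hg
    have heq : blockEndo lam d (jk d i hsur k) j s hdvd2
        (g lam d i hsur ⟨(k, maxl i (SW lam d i hsur W) k), hh⟩)
        = lof R ι (Vb lam d) j (component R ι (Vb lam d) j v) := by
      rw [blockEndo_apply]
      simp only [g]
      rw [component.lof_self, blockHom_mkq]
      congr 1
      rw [← hs, mul_comm]
      simp only [eS, ← hk]
    rw [heq] at hthis
    exact hthis

include hmono in
lemma g_mem_ES_iff {S : Set (GTPoset m i)} (hS : IsLowerSet S) (x : GTPoset m i) :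
    g lam d i hsur x ∈ ES lam d i hrange S ↔ x ∈ S := by
  obtain ⟨⟨k', l'⟩, h1, h2⟩ := x
  have h1' : 1 ≤ l' := h1
  have h2' : l' ≤ i k' := h2
  rw [mem_ES]
  have hkj : kj d i hrange (jk d i hsur k') = k' := kj_eq d i hmono hrange (d_jk d i hsur k')
  constructor
  · intro h
    have hj := h (jk d i hsur k')
    rw [hkj] at hj
    simp only [g] at hj
    rw [component.lof_self] at hj
    have ha : i (k', l').1 - (k', l').2 < d (jk d i hsur k') := by
      rw [d_jk d i hsur]
      show i k' - l' < i k'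
      omega
    have hle := (mkq_pow_mem_span_iff lam d ha).1 hj
    have hml := maxl_le i S k'
    have hl'm : l' ≤ maxl i S k' := by
      simp only [eS] at hle
      have : i (k', l').1 - (k', l').2 = i k' - l' := rfl
      omega
    have h1m : 1 ≤ maxl i S k' := le_trans h1' hl'm
    obtain ⟨hh, hmm⟩ := maxl_mem i h1m
    refine hS (b := ⟨(k', l'), h1, h2⟩) ⟨hl'm, ?_⟩ hmm
    show i k' - maxl i S k' ≤ i k' - l'
    omega
  · intro hx j
    by_cases hj : jk d i hsur k' = j
    · subst hj
      rw [hkj]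
      simp only [g]
      rw [component.lof_self]
      have hml : l' ≤ maxl i S k' := le_maxl i hx
      have hmle := maxl_le i S k'
      have hce : eS i S k' ≤ i (k', l').1 - (k', l').2 := by
        show eS i S k' ≤ i k' - l'
        simp only [eS]
        omega
      have := mem_span_mkq_pow (j := jk d i hsur k') lam d hce 1
      rwa [mul_one] at this
    · simp only [g]
      rw [component.of, dif_neg hj]
      exact Submodule.zero_mem _

lemma eS_comb {S : Set (GTPoset m i)} (hS : IsLowerSet S) (k k' : Fin m) :
    eS i S k ≤ eS i S k' + (i k - i k') := by
  have hmk := maxl_le i S k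
  have hmk' := maxl_le i S k'
  rcases Nat.eq_zero_or_pos (maxl i S k') with h0 | h1
  · simp only [eS, h0]
    omega
  · obtain ⟨hh, hmm⟩ := maxl_mem i h1
    by_cases hl : maxl i S k' ≤ i k' - i k
    · simp only [eS]
      omega
    · have hlk : maxl i S k' - (i k' - i k) ≤ i k := by omega
      have hl1 : 1 ≤ maxl i S k' - (i k' - i k) := by omega
      have hmem := hS (a := ⟨(k', maxl i S k'), hh⟩)
          (b := ⟨(k, maxl i S k' - (i k' - i k)), hl1, hlk⟩)
          ⟨by show maxl i S k' - (i k' - i k) ≤ maxl i S k'; omega,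
           by show i k' - maxl i S k' ≤ i k - (maxl i S k' - (i k' - i k)); omega⟩ hmm
      have hlm := le_maxl i hmem
      simp only [eS]
      omega

include hmono in
lemma fullyInv_ES {S : Set (GTPoset m i)} (hS : IsLowerSet S) :
    FullyInv lam ι d (ES lam d i hrange S) := by
  intro φ v hv
  rw [mem_ES] at hv ⊢
  intro j
  rw [decomp lam d v, map_sum, map_sum]
  refine Submodule.sum_mem _ (fun j' _ => ?_)
  obtain ⟨s, hs⟩ := Submodule.mem_span_singleton.1 (hv j')
  rw [smul_mkq] at hs
  obtain ⟨q, hq, hcomp⟩ := endo_component lam d φ j' j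
  rw [← hs, hcomp]
  obtain ⟨q', hq'⟩ := hq
  have hrw : s * pp ^ (eS i S (kj d i hrange j')) * q
      = pp ^ (eS i S (kj d i hrange j') + (d j - d j')) * (s * q') := by
    rw [hq', pow_add]
    ring
  rw [hrw]
  apply mem_span_mkq_pow
  have e1 : d j = i (kj d i hrange j) := d_kj d i hrange j
  have e2 : d j' = i (kj d i hrange j') := d_kj d i hrange j'
  have hcomb := eS_comb i hS (kj d i hrange j) (kj d i hrange j')
  omega

lemma ES_mono {S S' : Set (GTPoset m i)} (h : S ⊆ S') :
    ES lam d i hrange S ≤ ES lam d i hrange S' := by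
  intro v hv
  rw [mem_ES] at hv ⊢
  intro j
  set k := kj d i hrange j
  have hmax : maxl i S k ≤ maxl i S' k := by
    refine csSup_le' ?_
    rintro l ⟨hh, hm⟩
    exact le_maxl i (h hm)
  have he : eS i S' k ≤ eS i S k := by
    simp only [eS]
    omega
  obtain ⟨s, hs⟩ := Submodule.mem_span_singleton.1 (hv j)
  rw [smul_mkq] at hs
  rw [← hs, mul_comm]
  exact mem_span_mkq_pow lam d he s

noncomputable def theIso :
    {W : Submodule ℂ (VV lam d) // FullyInv lam ι d W} ≃o LowerSet (GTPoset m i) where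
  toFun W := ⟨SW lam d i hsur W.1, lower_SW lam d i hmono hsur W.2⟩
  invFun S := ⟨ES lam d i hrange S.carrier, fullyInv_ES lam d i hmono hrange S.lower'⟩
  left_inv W := by
    apply Subtype.ext
    exact le_antisymm (ES_sub_W lam d i hmono hrange hsur W.2)
      (W_sub_ES lam d i hmono hrange hsur W.2)
  right_inv S := by
    apply SetLike.ext
    intro x
    exact g_mem_ES_iff lam d i hmono hrange hsur S.lower' x
  map_rel_iff' {W W'} := by
    constructor
    · intro h
      have hsub : SW lam d i hsur W.1 ⊆ SW lam d i hsur W'.1 := LowerSet.coe_subset_coe.2 h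
      rw [← Subtype.coe_le_coe]
      calc W.1 ≤ ES lam d i hrange (SW lam d i hsur W.1) :=
            W_sub_ES lam d i hmono hrange hsur W.2
        _ ≤ ES lam d i hrange (SW lam d i hsur W'.1) := ES_mono lam d i hrange hsub
        _ ≤ W'.1 := ES_sub_W lam d i hmono hrange hsur W'.2
    · intro h
      rw [← Subtype.coe_le_coe] at h
      refine LowerSet.coe_subset_coe.1 ?_
      intro x hx
      exact h hx

end Main

end StmtAux

/-- For `V = ⨁_j ℂ[x]/(p^{d j})` whose distinct block sizes are `i 0 < ⋯ < i (m-1)`, the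
lattice of fully invariant subspaces of `V` ordered by inclusion (joins are sums, meets are
intersections) is isomorphic to the lattice of decreasing subsets (lower sets) of the poset
`P_B`, ordered by inclusion. -/
theorem stmt10 (lam : ℂ) (ι : Type*) [Fintype ι] [DecidableEq ι]
    (d : ι → ℕ) (hd : ∀ j, 1 ≤ d j)
    (m : ℕ) (i : Fin m → ℕ) (hmono : StrictMono i)
    (hrange : ∀ j : ι, ∃ k : Fin m, d j = i k) (hsur : ∀ k : Fin m, ∃ j : ι, d j = i k) :
    (∀ A B : Submodule ℂ (⨁ j : ι, Polynomial ℂ ⧸ Ideal.span {(X - C lam) ^ d j}),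
      FullyInv lam ι d A → FullyInv lam ι d B →
        FullyInv lam ι d (A ⊔ B) ∧ FullyInv lam ι d (A ⊓ B)) ∧
    Nonempty
      ({W : Submodule ℂ (⨁ j : ι, Polynomial ℂ ⧸ Ideal.span {(X - C lam) ^ d j}) //
          FullyInv lam ι d W} ≃o LowerSet (GTPoset m i)) := by
  constructor
  · intro A B hA hB
    constructor
    · intro φ w hw
      rw [Submodule.mem_sup] at hw ⊢
      obtain ⟨a, ha, b, hb, rfl⟩ := hw
      exact ⟨φ a, hA φ a ha, φ b, hB φ b hb, (map_add φ a b).symm⟩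
    · intro φ w hw
      exact ⟨hA φ w hw.1, hB φ w hw.2⟩
  · exact ⟨StmtAux.theIso lam d i hmono hrange hsur⟩
end

section
/- Let V be a finite-dimensional complex vector space and T : V → V a linear operator. The collection of c(T)-invariant subspaces of V is closed under subspace sum and intersection, and forms a distributive lattice: for all c(T)-invariant subspaces A, B, C of V, one has A ∩ (B + C) = (A ∩ B) + (A ∩ C). -/
/-!
A subspace invariant under every operator commuting with `T` is the same thing as a fully
invariant submodule of the `K[X]`-module `V` on which `X` acts as `T`. By the structure theorem
this module is a finite direct sum of cyclic modules `K[X] ⧸ (pᵢ ^ eᵢ)`, and the submodules of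
each summand form a chain. The coordinate projections `πᵢ` are `K[X]`-linear and sum to the
identity. If `v = b + c ∈ A` with `b ∈ B` and `c ∈ C`, then for each `i` one of `πᵢ B`,
`πᵢ C` contains the other, so `πᵢ v` lies in `A ⊓ B` or in `A ⊓ C`; summing over `i` puts `v`
in `A ⊓ B ⊔ A ⊓ C`.
-/

open Module Polynomial

namespace Submodule

variable {R M : Type*} [Semiring R] [AddCommMonoid M] [Module R M]

theorem inf_sup_le_of_sum_eq_one {ι : Type*} [Fintype ι] (π : ι → End R M)
    (hsum : ∑ i, π i = 1)
    (htotal : ∀ i (B C : Submodule R M),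
      B.map (π i) ≤ C.map (π i) ∨ C.map (π i) ≤ B.map (π i))
    {A B C : Submodule R M} (hA : ∀ i, A ≤ A.comap (π i)) (hB : ∀ i, B ≤ B.comap (π i))
    (hC : ∀ i, C ≤ C.comap (π i)) :
    A ⊓ (B ⊔ C) ≤ A ⊓ B ⊔ A ⊓ C := by
  rintro v ⟨hvA, hvBC⟩
  obtain ⟨b, hb, c, hc, rfl⟩ := mem_sup.mp hvBC
  have hv : ∑ i, π i (b + c) = b + c := by
    rw [← LinearMap.sum_apply, hsum, Module.End.one_apply]
  rw [← hv]
  refine sum_mem fun i _ => ?_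
  have hπA : π i b + π i c ∈ A := map_add (π i) b c ▸ hA i hvA
  rw [map_add]
  rcases htotal i B C with hBC | hCB
  · have hπb : π i b ∈ C := map_le_iff_le_comap.mpr (hC i) (hBC (mem_map_of_mem hb))
    exact mem_sup_right ⟨hπA, C.add_mem hπb (hC i hc)⟩
  · have hπc : π i c ∈ B := map_le_iff_le_comap.mpr (hB i) (hCB (mem_map_of_mem hc))
    exact mem_sup_left ⟨hπA, B.add_mem (hB i hb) hπc⟩

end Submodule

namespace DirectSum

variable {R ι : Type*} [Semiring R] [DecidableEq ι] {Q : ι → Type*}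
  [∀ i, AddCommMonoid (Q i)] [∀ i, Module R (Q i)]

theorem sum_lof_comp_component [Fintype ι] : ∑ i, lof R ι Q i ∘ₗ component R ι Q i = 1 :=
  LinearMap.ext fun x => by
    simpa only [LinearMap.sum_apply, LinearMap.comp_apply, ← apply_eq_component, lof_eq_of,
      Module.End.one_apply]
      using sum_univ_of x

end DirectSum

section PrincipalIdealRing

variable {R : Type*} [CommRing R] [IsDomain R] [IsPrincipalIdealRing R]

theorem Ideal.exists_eq_span_pow_of_span_pow_le {p : R} (hp : Prime p) {e : ℕ} {I : Ideal R}
    (hI : span {p ^ e} ≤ I) : ∃ k, I = span {p ^ k} := by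
  obtain ⟨a, rfl⟩ := (IsPrincipalIdealRing.principal I).principal
  obtain ⟨k, -, hk⟩ := (dvd_prime_pow hp e).mp (span_singleton_le_span_singleton.mp hI)
  exact ⟨k, span_singleton_eq_span_singleton.mpr hk⟩

theorem Ideal.le_total_of_span_pow_le {p : R} (hp : Prime p) {e : ℕ} {I J : Ideal R}
    (hI : span {p ^ e} ≤ I) (hJ : span {p ^ e} ≤ J) : I ≤ J ∨ J ≤ I := by
  obtain ⟨k, rfl⟩ := exists_eq_span_pow_of_span_pow_le hp hI
  obtain ⟨l, rfl⟩ := exists_eq_span_pow_of_span_pow_le hp hJ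
  simp only [span_singleton_le_span_singleton]
  exact (le_total l k).imp (pow_dvd_pow p) (pow_dvd_pow p)

theorem Submodule.le_total_quotient_span_pow {p : R} (hp : Prime p) (e : ℕ)
    (S S' : Submodule R (R ⧸ R ∙ p ^ e)) : S ≤ S' ∨ S' ≤ S := by
  have hsurj := (R ∙ p ^ e).mkQ_surjective
  simp only [← comap_le_comap_iff_of_surjective hsurj]
  exact Ideal.le_total_of_span_pow_le hp (le_comap_mkQ _ S) (le_comap_mkQ _ S')

theorem Submodule.IsFullyInvariant.inf_sup_eq {M : Type*} [AddCommGroup M] [Module R M]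
    [Module.Finite R M] (hM : IsTorsion R M) {A B C : Submodule R M} (hA : A.IsFullyInvariant)
    (hB : B.IsFullyInvariant) (hC : C.IsFullyInvariant) : A ⊓ (B ⊔ C) = A ⊓ B ⊔ A ⊓ C := by
  classical
  obtain ⟨ι, _, p, hp, e, ⟨f⟩⟩ := Module.equiv_directSum_of_isTorsion hM
  let π i := f.symm.conj (DirectSum.lof R ι _ i ∘ₗ DirectSum.component R ι _ i)
  refine le_antisymm (Submodule.inf_sup_le_of_sum_eq_one π ?_ ?_ (fun i => hA _)
    (fun i => hB _) (fun i => hC _)) le_inf_sup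
  · rw [← map_sum, DirectSum.sum_lof_comp_component]
    exact f.symm.conj_id
  · intro i B C
    simp only [π, LinearEquiv.conj_apply, Submodule.map_comp]
    exact (Submodule.le_total_quotient_span_pow (hp i).prime (e i) _ _).imp
      (fun h => map_mono (map_mono h)) (fun h => map_mono (map_mono h))

end PrincipalIdealRing

namespace Module.End

variable {K V : Type*}

section

variable [CommSemiring K] [AddCommMonoid V] [Module K V]

def IsHyperinvariant (T : End K V) (W : Submodule K V) : Prop :=
  ∀ S : End K V, Commute S T → ∀ v ∈ W, S v ∈ W

variable {T : End K V} {A B W : Submodule K V}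

theorem IsHyperinvariant.sup (hA : IsHyperinvariant T A) (hB : IsHyperinvariant T B) :
    IsHyperinvariant T (A ⊔ B) := fun S hS v hv => by
  obtain ⟨a, ha, b, hb, rfl⟩ := Submodule.mem_sup.mp hv
  exact map_add S a b ▸ Submodule.add_mem_sup (hA S hS a ha) (hB S hS b hb)

theorem IsHyperinvariant.inf (hA : IsHyperinvariant T A) (hB : IsHyperinvariant T B) :
    IsHyperinvariant T (A ⊓ B) :=
  fun S hS v hv => ⟨hA S hS v hv.1, hB S hS v hv.2⟩

theorem IsHyperinvariant.mem_invtSubmodule (hW : IsHyperinvariant T W) :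
    W ∈ (Algebra.lsmul K K V T).invtSubmodule :=
  fun v hv => hW T (Commute.refl T) v hv

theorem commute_conj_restrictScalars (f : End K[X] (AEval' T)) :
    Commute ((AEval'.of T).symm.conj (f.restrictScalars K)) T := by
  ext v
  simp [LinearEquiv.conj_apply, ← AEval'.X_smul_of]

theorem IsHyperinvariant.isFullyInvariant (hW : IsHyperinvariant T W) :
    (AEval.mapSubmodule K V T ⟨W, hW.mem_invtSubmodule⟩).IsFullyInvariant := by
  intro f m hm
  rw [AEval.mem_mapSubmodule_apply] at hm
  simpa [LinearEquiv.conj_apply] using hW _ (commute_conj_restrictScalars f) _ hm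

end

theorem IsHyperinvariant.inf_sup_eq [Field K] [AddCommGroup V] [Module K V]
    [FiniteDimensional K V] {T : End K V} {A B C : Submodule K V} (hA : IsHyperinvariant T A)
    (hB : IsHyperinvariant T B) (hC : IsHyperinvariant T C) : A ⊓ (B ⊔ C) = A ⊓ B ⊔ A ⊓ C := by
  have h := Submodule.IsFullyInvariant.inf_sup_eq (AEval.isTorsion_of_finiteDimensional K V T)
    hA.isFullyInvariant hB.isFullyInvariant hC.isFullyInvariant
  simp only [← map_inf, ← map_sup] at h
  exact congrArg Subtype.val ((AEval.mapSubmodule K V T).injective h)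

end Module.End

/-- The collection of `c(T)`-invariant subspaces of `V` is closed under subspace sum and
intersection, and forms a distributive lattice: for `c(T)`-invariant subspaces `A, B, C`
one has `A ∩ (B + C) = (A ∩ B) + (A ∩ C)`. -/
theorem stmt11 (V : Type*) [AddCommGroup V] [Module ℂ V] [FiniteDimensional ℂ V]
    (T : Module.End ℂ V) :
    (∀ A B : Submodule ℂ V,
      (∀ S : Module.End ℂ V, Commute S T → ∀ v ∈ A, S v ∈ A) →
      (∀ S : Module.End ℂ V, Commute S T → ∀ v ∈ B, S v ∈ B) →
      (∀ S : Module.End ℂ V, Commute S T → ∀ v ∈ A ⊔ B, S v ∈ A ⊔ B) ∧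
      (∀ S : Module.End ℂ V, Commute S T → ∀ v ∈ A ⊓ B, S v ∈ A ⊓ B)) ∧
    (∀ A B C : Submodule ℂ V,
      (∀ S : Module.End ℂ V, Commute S T → ∀ v ∈ A, S v ∈ A) →
      (∀ S : Module.End ℂ V, Commute S T → ∀ v ∈ B, S v ∈ B) →
      (∀ S : Module.End ℂ V, Commute S T → ∀ v ∈ C, S v ∈ C) →
      A ⊓ (B ⊔ C) = A ⊓ B ⊔ A ⊓ C) := by
  open Module.End in
  exact ⟨fun A B hA hB => ⟨IsHyperinvariant.sup hA hB, IsHyperinvariant.inf hA hB⟩,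
    fun A B C hA hB hC => IsHyperinvariant.inf_sup_eq hA hB hC⟩
end

section
/- Let 0 < i_1 < i_2 < ⋯ < i_m be integers, and define the poset P_B on {(k, l) : 1 ≤ k ≤ m, 1 ≤ l ≤ i_k} by (k', l') ≤ (k, l) if and only if l' ≤ l and i_{k'} − l' ≥ i_k − l. Let C_k = {(k, l) : 1 ≤ l ≤ i_k} be the k-th column, and let Δ_1 = i_1 and Δ_k = i_k − i_{k−1} for k > 1. Then the map sending a decreasing subset X ⊆ P_B to the tuple δ^X with δ^X_1 = #(X ∩ C_1) and δ^X_k = #(X ∩ C_k) − #(X ∩ C_{k−1}) for k > 1 is a bijection from the set of decreasing subsets of P_B onto the product [Δ_1] × [Δ_2] × ⋯ × [Δ_m], where [n] = {0, 1, …, n}. -/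
open Finset

section FinDiff

variable {m : ℕ}

def finDiff (g : Fin m → ℕ) (k : Fin m) : ℕ :=
  if k.val = 0 then g k
  else g k - g ⟨k.val - 1, Nat.lt_of_le_of_lt (Nat.sub_le _ _) k.isLt⟩

def partialSum (δ : Fin m → ℕ) (k : Fin m) : ℕ := ∑ j ∈ Iic k, δ j

lemma finDiff_zero (g : Fin m → ℕ) (h : 0 < m) : finDiff g ⟨0, h⟩ = g ⟨0, h⟩ := if_pos rfl

lemma finDiff_succ (g : Fin m → ℕ) {p : ℕ} (h : p + 1 < m) :
    finDiff g ⟨p + 1, h⟩ = g ⟨p + 1, h⟩ - g ⟨p, by omega⟩ := if_neg p.succ_ne_zero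

lemma partialSum_zero (δ : Fin m → ℕ) (h : 0 < m) : partialSum δ ⟨0, h⟩ = δ ⟨0, h⟩ := by
  have : Iic (⟨0, h⟩ : Fin m) = {⟨0, h⟩} := by
    ext j
    simp [Fin.le_def, Fin.ext_iff]
  simp [partialSum, this]

lemma partialSum_add_sum_Ioc (δ : Fin m → ℕ) {k' k : Fin m} (hk : k' ≤ k) :
    partialSum δ k' + ∑ j ∈ Ioc k' k, δ j = partialSum δ k := by
  rw [partialSum, partialSum, ← sum_union (Iic_disjoint_Ioc le_rfl), Iic_union_Ioc_eq_Iic hk]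

lemma partialSum_succ (δ : Fin m → ℕ) {p : ℕ} (h : p + 1 < m) :
    partialSum δ ⟨p + 1, h⟩ = partialSum δ ⟨p, by omega⟩ + δ ⟨p + 1, h⟩ := by
  have : Ioc (⟨p, by omega⟩ : Fin m) ⟨p + 1, h⟩ = {⟨p + 1, h⟩} := by
    ext j
    simp only [mem_Ioc, Fin.lt_def, Fin.le_def, mem_singleton, Fin.ext_iff]
    omega
  rw [← partialSum_add_sum_Ioc δ (k' := ⟨p, by omega⟩) (Fin.mk_le_mk.2 p.le_succ), this,
    sum_singleton]

lemma partialSum_mono (δ : Fin m → ℕ) : Monotone (partialSum δ) := fun _ _ hk =>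
  sum_le_sum_of_subset (Iic_subset_Iic.2 hk)

lemma finDiff_partialSum (δ : Fin m → ℕ) : finDiff (partialSum δ) = δ := by
  funext ⟨k, hk⟩
  cases k with
  | zero => rw [finDiff_zero, partialSum_zero]
  | succ p => rw [finDiff_succ, partialSum_succ, Nat.add_sub_cancel_left]

lemma partialSum_finDiff {g : Fin m → ℕ} (hg : Monotone g) : partialSum (finDiff g) = g := by
  funext ⟨k, hk⟩
  induction k with
  | zero => rw [partialSum_zero, finDiff_zero]
  | succ p ih =>
    rw [partialSum_succ, ih, finDiff_succ]
    have := hg (Fin.mk_le_mk.2 p.le_succ : (⟨p, by omega⟩ : Fin m) ≤ ⟨p + 1, hk⟩)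
    omega

end FinDiff

/-- The column counts of decreasing subsets of `GTPoset m i` are exactly these `c`. -/
structure IsColumnProfile {m : ℕ} (i c : Fin m → ℕ) : Prop where
  monotone : Monotone c
  le : ∀ k, c k ≤ i k
  add_le_add : ∀ ⦃k' k⦄, k' ≤ k → c k + i k' ≤ c k' + i k

section ColumnProfile

variable {m : ℕ} {i c : Fin m → ℕ}

lemma IsColumnProfile.finDiff_le (hc : IsColumnProfile i c) (k : Fin m) :
    finDiff c k ≤ finDiff i k := by
  obtain ⟨_ | p, hk⟩ := k
  · rw [finDiff_zero, finDiff_zero]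
    exact hc.le _
  · rw [finDiff_succ, finDiff_succ]
    have := hc.add_le_add (Fin.mk_le_mk.2 p.le_succ : (⟨p, by omega⟩ : Fin m) ≤ ⟨p + 1, hk⟩)
    omega

lemma isColumnProfile_partialSum (hi : Monotone i) {δ : Fin m → ℕ}
    (hδ : ∀ k, δ k ≤ finDiff i k) : IsColumnProfile i (partialSum δ) where
  monotone := partialSum_mono δ
  le k := by
    rw [← congrFun (partialSum_finDiff hi) k]
    exact sum_le_sum fun j _ => hδ j
  add_le_add k' k hk := by
    have hsum : ∑ j ∈ Ioc k' k, δ j ≤ ∑ j ∈ Ioc k' k, finDiff i j := sum_le_sum fun j _ => hδ j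
    rw [← partialSum_add_sum_Ioc δ hk]
    nth_rw 1 [← congrFun (partialSum_finDiff hi) k', ← congrFun (partialSum_finDiff hi) k,
      ← partialSum_add_sum_Ioc (finDiff i) hk]
    omega

end ColumnProfile

namespace GTPoset

variable {m : ℕ} {i : Fin m → ℕ}

lemma le_iff {a b : GTPoset m i} :
    a ≤ b ↔ a.val.2 ≤ b.val.2 ∧ i b.val.1 - b.val.2 ≤ i a.val.1 - a.val.2 := Iff.rfl

lemma le_of_fst_eq {a b : GTPoset m i} (h : a.val.1 = b.val.1) (hl : a.val.2 ≤ b.val.2) :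
    a ≤ b :=
  le_iff.2 ⟨hl, by rw [h]; omega⟩

def col (k : Fin m) : Set (GTPoset m i) := {x | x.val.1 = k}

noncomputable def colCard (X : Set (GTPoset m i)) (k : Fin m) : ℕ := (X ∩ col k).ncard

lemma injOn_snd_col (k : Fin m) : Set.InjOn (fun x : GTPoset m i => x.val.2) (col k) :=
  fun _ hx _ hy h => Subtype.ext (Prod.ext (hx.trans hy.symm) h)

lemma image_snd_subset_Icc (X : Set (GTPoset m i)) (k : Fin m) :
    (fun x => x.val.2) '' (X ∩ col k) ⊆ Set.Icc 1 (i k) := by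
  rintro _ ⟨x, ⟨-, rfl⟩, rfl⟩
  exact x.prop

lemma colCard_eq_ncard_image (X : Set (GTPoset m i)) (k : Fin m) :
    colCard X k = ((fun x => x.val.2) '' (X ∩ col k)).ncard :=
  (((injOn_snd_col k).mono Set.inter_subset_right).ncard_image).symm

lemma colCard_le (X : Set (GTPoset m i)) (k : Fin m) : colCard X k ≤ i k := by
  rw [colCard_eq_ncard_image]
  simpa using Set.ncard_le_ncard (image_snd_subset_Icc X k) (Set.finite_Icc _ _)

lemma mem_iff_le_colCard {X : Set (GTPoset m i)} (hX : IsLowerSet X) (x : GTPoset m i) :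
    x ∈ X ↔ x.val.2 ≤ colCard X x.val.1 := by
  rw [colCard_eq_ncard_image]
  constructor
  · intro hx
    have hsub : Set.Icc 1 x.val.2 ⊆ (fun y => y.val.2) '' (X ∩ col x.val.1) := fun l hl =>
      ⟨⟨(x.val.1, l), hl.1, hl.2.trans x.prop.2⟩,
        ⟨hX (by exact le_of_fst_eq rfl hl.2) hx, rfl⟩, rfl⟩
    simpa using Set.ncard_le_ncard hsub
      ((Set.finite_Icc _ _).subset (image_snd_subset_Icc X x.val.1))
  · intro hle
    by_contra hx
    have hsub : (fun y => y.val.2) '' (X ∩ col x.val.1) ⊆ Set.Icc 1 (x.val.2 - 1) := by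
      rintro _ ⟨y, ⟨hy, hyx⟩, rfl⟩
      refine ⟨y.prop.1, show y.val.2 ≤ x.val.2 - 1 from ?_⟩
      by_contra hlt
      exact hx (hX (le_of_fst_eq hyx.symm (by omega)) hy)
    have hcard := Set.ncard_le_ncard hsub (Set.finite_Icc _ _)
    rw [Set.ncard_Icc_nat] at hcard
    have := x.prop.1
    omega

lemma eq_setOf_le_colCard {X : Set (GTPoset m i)} (hX : IsLowerSet X) :
    X = {x | x.val.2 ≤ colCard X x.val.1} :=
  Set.ext (mem_iff_le_colCard hX)

lemma colCard_setOf_le {c : Fin m → ℕ} {k : Fin m} (hc : c k ≤ i k) :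
    colCard {x : GTPoset m i | x.val.2 ≤ c x.val.1} k = c k := by
  have himage : (fun x => x.val.2) '' ({x : GTPoset m i | x.val.2 ≤ c x.val.1} ∩ col k) =
      Set.Icc 1 (c k) := by
    ext l
    constructor
    · rintro ⟨x, ⟨hx, rfl⟩, rfl⟩
      exact ⟨x.prop.1, hx⟩
    · rintro ⟨h1, h2⟩
      exact ⟨⟨(k, l), h1, h2.trans hc⟩, ⟨h2, rfl⟩, rfl⟩
  rw [colCard_eq_ncard_image, himage, Set.ncard_Icc_nat, Nat.add_sub_cancel]

lemma isColumnProfile_colCard (hi : Monotone i) {X : Set (GTPoset m i)} (hX : IsLowerSet X) :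
    IsColumnProfile i (colCard X) where
  monotone k' k hk := by
    obtain h0 | h0 := Nat.eq_zero_or_pos (colCard X k')
    · omega
    have hx : (⟨(k', colCard X k'), h0, colCard_le X k'⟩ : GTPoset m i) ∈ X :=
      (mem_iff_le_colCard hX _).2 le_rfl
    -- moving to a later column at the same height goes down in `P_B`
    have hy : (⟨(k, colCard X k'), h0, (colCard_le X k').trans (hi hk)⟩ : GTPoset m i) ∈ X :=
      hX (by exact le_iff.2 ⟨le_rfl, Nat.sub_le_sub_right (hi hk) _⟩) hx
    exact (mem_iff_le_colCard hX _).1 hy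
  le := colCard_le X
  add_le_add k' k hk := by
    have hik := hi hk
    have hn := colCard_le X k
    by_cases hsmall : colCard X k ≤ i k - i k'
    · omega
    have hx : (⟨(k, colCard X k), by omega, hn⟩ : GTPoset m i) ∈ X :=
      (mem_iff_le_colCard hX _).2 le_rfl
    -- `(k', n - (i k - i k'))` lies on the same antidiagonal as `(k, n)`
    have hy : (⟨(k', colCard X k - (i k - i k')), by omega, show _ ≤ i k' by omega⟩ :
        GTPoset m i) ∈ X := by
      refine hX ?_ hx
      exact le_iff.2 ⟨Nat.sub_le _ _,
        show i k - colCard X k ≤ i k' - (colCard X k - (i k - i k')) by omega⟩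
    have := (mem_iff_le_colCard hX _).1 hy
    dsimp only at this
    omega

lemma isLowerSet_setOf_le {c : Fin m → ℕ} (hc : IsColumnProfile i c) :
    IsLowerSet {x : GTPoset m i | x.val.2 ≤ c x.val.1} := by
  intro b a hab (hb : b.val.2 ≤ c b.val.1)
  obtain ⟨hl, hd⟩ := le_iff.1 hab
  show a.val.2 ≤ c a.val.1
  rcases le_total a.val.1 b.val.1 with h | h
  · have := hc.add_le_add h
    have := a.prop
    have := b.prop
    omega
  · exact hl.trans (hb.trans (hc.monotone h))

end GTPoset

open GTPoset in
theorem stmt12_general (m : ℕ) (i : Fin m → ℕ) (hmono : StrictMono i)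
    (Δ : Fin m → ℕ)
    (hΔ : ∀ k : Fin m, Δ k = if k.val = 0 then i k
      else i k - i ⟨k.val - 1, Nat.lt_of_le_of_lt (Nat.sub_le _ _) k.isLt⟩)
    (C : Fin m → Set (GTPoset m i)) (hC : ∀ k : Fin m, C k = {x | x.val.1 = k})
    (F : Set (GTPoset m i) → Fin m → ℕ)
    (hF : ∀ (X : Set (GTPoset m i)) (k : Fin m),
      F X k = if k.val = 0 then (X ∩ C k).ncard
        else (X ∩ C k).ncard -
          (X ∩ C ⟨k.val - 1, Nat.lt_of_le_of_lt (Nat.sub_le _ _) k.isLt⟩).ncard) :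
    (∀ X : Set (GTPoset m i), IsLowerSet X → ∀ k, F X k ≤ Δ k) ∧
    (∀ X Y : Set (GTPoset m i), IsLowerSet X → IsLowerSet Y → F X = F Y → X = Y) ∧
    (∀ δ : Fin m → ℕ, (∀ k, δ k ≤ Δ k) →
      ∃ X : Set (GTPoset m i), IsLowerSet X ∧ F X = δ) := by
  obtain rfl : Δ = finDiff i := funext hΔ
  obtain rfl : C = col := funext hC
  obtain rfl : F = fun X => finDiff (colCard X) := funext fun X => funext (hF X)
  have hi := hmono.monotone
  refine ⟨fun X hX => (isColumnProfile_colCard hi hX).finDiff_le, fun X Y hX hY hXY => ?_,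
    fun δ hδ => ?_⟩
  · beta_reduce at hXY
    rw [eq_setOf_le_colCard hX, eq_setOf_le_colCard hY,
      ← partialSum_finDiff (isColumnProfile_colCard hi hX).monotone, hXY,
      partialSum_finDiff (isColumnProfile_colCard hi hY).monotone]
  · have hc := isColumnProfile_partialSum hi hδ
    refine ⟨_, isLowerSet_setOf_le hc, ?_⟩
    have hcard : colCard {x : GTPoset m i | x.val.2 ≤ partialSum δ x.val.1} = partialSum δ :=
      funext fun k => colCard_setOf_le (hc.le k)
    simp only [hcard, finDiff_partialSum]

/-- For the poset `P_B` built from `0 < i 0 < ⋯ < i (m-1)`, with columns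
`C k = {(k, l) : 1 ≤ l ≤ i k}` and increments `Δ 0 = i 0`, `Δ k = i k - i (k-1)`, the map
sending a decreasing subset `X` to the tuple of increments
`δ^X_k = #(X ∩ C_k) - #(X ∩ C_{k-1})` (with `δ^X_0 = #(X ∩ C_0)`) is a bijection from the
decreasing subsets of `P_B` onto `[Δ_1] × ⋯ × [Δ_m]`, where `[n] = {0, …, n}`. -/
theorem stmt12 (m : ℕ) (i : Fin m → ℕ) (hmono : StrictMono i) (hpos : ∀ k, 0 < i k)
    (Δ : Fin m → ℕ)
    (hΔ : ∀ k : Fin m, Δ k = if k.val = 0 then i k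
      else i k - i ⟨k.val - 1, Nat.lt_of_le_of_lt (Nat.sub_le _ _) k.isLt⟩)
    (C : Fin m → Set (GTPoset m i)) (hC : ∀ k : Fin m, C k = {x | x.val.1 = k})
    (F : Set (GTPoset m i) → Fin m → ℕ)
    (hF : ∀ (X : Set (GTPoset m i)) (k : Fin m),
      F X k = if k.val = 0 then (X ∩ C k).ncard
        else (X ∩ C k).ncard -
          (X ∩ C ⟨k.val - 1, Nat.lt_of_le_of_lt (Nat.sub_le _ _) k.isLt⟩).ncard) :
    (∀ X : Set (GTPoset m i), IsLowerSet X → ∀ k, F X k ≤ Δ k) ∧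
    (∀ X Y : Set (GTPoset m i), IsLowerSet X → IsLowerSet Y → F X = F Y → X = Y) ∧
    (∀ δ : Fin m → ℕ, (∀ k, δ k ≤ Δ k) →
      ∃ X : Set (GTPoset m i), IsLowerSet X ∧ F X = δ) :=
  stmt12_general m i hmono Δ hΔ C hC F hF
end

section
/- Let λ ∈ ℂ, p = x − λ ∈ ℂ[x], ι a finite index set, d : ι → ℕ with d(j) ≥ 1 for all j, and V = ⨁_{j ∈ ι} ℂ[x]/(p^{d(j)}). Let i_1 < i_2 < ⋯ < i_m be the distinct values of d, and set Δ_1 = i_1 and Δ_k = i_k − i_{k−1} for k > 1. Let Γ_Δ be the set of tuples (δ_1, …, δ_m) with 0 ≤ δ_k ≤ Δ_k, partially ordered by δ ≤ δ' if and only if δ_1 + ⋯ + δ_k ≤ δ'_1 + ⋯ + δ'_k for all k = 1, …, m. Then the set of fully invariant subspaces of V, ordered by inclusion, is order-isomorphic to Γ_Δ. -/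
set_option synthInstance.maxHeartbeats 1000000
set_option maxHeartbeats 1000000

open Polynomial DirectSum

/-- The poset `Γ_Δ` of tuples `(δ_1, …, δ_m)` with `0 ≤ δ_k ≤ Δ_k`, ordered by
`δ ≤ δ'` iff `δ_1 + ⋯ + δ_k ≤ δ'_1 + ⋯ + δ'_k` for all `k`. -/
def GammaPoset (m : ℕ) (Δ : Fin m → ℕ) : Type := {δ : Fin m → ℕ // ∀ k, δ k ≤ Δ k}

instance (m : ℕ) (Δ : Fin m → ℕ) : Preorder (GammaPoset m Δ) where
  le r s := ∀ k : Fin m, ∑ j ∈ Finset.Iic k, r.val j ≤ ∑ j ∈ Finset.Iic k, s.val j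
  le_refl r k := le_refl _
  le_trans r s t hrs hst k := (hrs k).trans (hst k)

/-!
Every cyclic block `ℂ[x]/(p^n)` is uniserial: its submodules are the `p^e ℂ[x]/(p^n)`,
`e ≤ n`. A fully invariant subspace is a `ℂ[x]`-submodule (multiplication by `x` is an
endomorphism), and since the projections onto the blocks are endomorphisms it is
`⨁_j p^{c_j} ℂ[x]/(p^{d_j})` for some exponents `c_j ≤ d_j`. The `ℂ[x]`-linear maps between
two blocks are multiplications by multiples of `p^{d_{j'} - d_j}`, so such a sum is fully
invariant exactly when `c_{j'} ≤ c_j + (d_{j'} - d_j)` for all `j, j'`. These exponents depend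
only on the block size `d_j = i_k`, and writing them as `i_k - (δ_1 + ⋯ + δ_k)` identifies
them, reversing the order, with `Γ_Δ`.
-/

section CyclicModule

variable {R : Type*} [CommRing R] {p : R}

theorem pow_sub_dvd_of_pow_dvd_pow_mul [IsDomain R] (hp : p ≠ 0) {a b : ℕ} {q : R}
    (h : p ^ b ∣ p ^ a * q) : p ^ (b - a) ∣ q := by
  rcases le_total b a with hba | hab
  · simp [Nat.sub_eq_zero_of_le hba]
  · obtain ⟨k, rfl⟩ := Nat.exists_eq_add_of_le hab
    rw [pow_add] at h
    rw [Nat.add_sub_cancel_left]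
    exact (mul_dvd_mul_iff_left (pow_ne_zero _ hp)).mp h

theorem Ideal.Quotient.smul_mk_s13 (I : Ideal R) (r x : R) :
    r • Ideal.Quotient.mk I x = Ideal.Quotient.mk I (r * x) :=
  rfl

theorem mk_pow_mem_span_mk_pow_iff [IsDomain R] (hp0 : p ≠ 0) (hpu : ¬IsUnit p) {n e g : ℕ}
    (he : e ≤ n) :
    Ideal.Quotient.mk (Ideal.span {p ^ n}) (p ^ g) ∈
      Submodule.span R {Ideal.Quotient.mk (Ideal.span {p ^ n}) (p ^ e)} ↔ e ≤ g := by
  rw [Submodule.mem_span_singleton]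
  constructor
  · rintro ⟨r, hr⟩
    rw [Ideal.Quotient.smul_mk_s13, Ideal.Quotient.mk_eq_mk_iff_sub_mem,
      Ideal.mem_span_singleton] at hr
    have : p ^ e ∣ p ^ g := by
      simpa using dvd_sub (dvd_mul_left (p ^ e) r) ((pow_dvd_pow p he).trans hr)
    exact (pow_dvd_pow_iff hp0 hpu).mp this
  · intro h
    exact ⟨p ^ (g - e), by rw [Ideal.Quotient.smul_mk_s13, ← pow_add, Nat.sub_add_cancel h]⟩

theorem map_span_mk_pow_le [IsDomain R] (hp : p ≠ 0) {a b e f : ℕ} (hf : f ≤ e + (b - a))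
    (ψ : (R ⧸ Ideal.span {p ^ a}) →ₗ[R] (R ⧸ Ideal.span {p ^ b})) :
    (Submodule.span R {Ideal.Quotient.mk (Ideal.span {p ^ a}) (p ^ e)}).map ψ ≤
      Submodule.span R {Ideal.Quotient.mk (Ideal.span {p ^ b}) (p ^ f)} := by
  simp only [Submodule.map_span_le, Set.mem_singleton_iff, forall_eq]
  obtain ⟨q, hq⟩ := Ideal.Quotient.mk_surjective (ψ (Ideal.Quotient.mk _ 1))
  have hψ (z : R) : ψ (Ideal.Quotient.mk _ z) = Ideal.Quotient.mk _ (z * q) := by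
    rw [← mul_one z, ← Ideal.Quotient.smul_mk_s13, map_smul, ← hq, Ideal.Quotient.smul_mk_s13,
      mul_one]
  -- `ψ` kills `p ^ a`, so `p ^ b ∣ p ^ a * q`
  have hq : p ^ (b - a) ∣ q := by
    refine pow_sub_dvd_of_pow_dvd_pow_mul hp (Ideal.mem_span_singleton.mp ?_)
    rw [← Ideal.Quotient.eq_zero_iff_mem, ← hψ, Ideal.Quotient.eq_zero_iff_mem.mpr
      (Ideal.mem_span_singleton_self _), map_zero]
  obtain ⟨t, ht⟩ := (pow_dvd_pow p hf).trans (pow_add p e (b - a) ▸ mul_dvd_mul_left _ hq)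
  exact Submodule.mem_span_singleton.mpr ⟨t, by rw [hψ, Ideal.Quotient.smul_mk_s13, ht, mul_comm]⟩

theorem exists_eq_span_mk_pow [IsDomain R] [IsPrincipalIdealRing R] (hp : Prime p) (n : ℕ)
    (N : Submodule R (R ⧸ Ideal.span {p ^ n})) :
    ∃ e ≤ n, N = Submodule.span R {Ideal.Quotient.mk (Ideal.span {p ^ n}) (p ^ e)} := by
  let π := (Ideal.span {p ^ n}).mkQ
  obtain ⟨g, hg⟩ := (IsPrincipalIdealRing.principal (N.comap π)).principal
  have hgn : g ∣ p ^ n := by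
    have : p ^ n ∈ N.comap π := by
      rw [Submodule.mem_comap, Submodule.mkQ_apply,
        (Submodule.Quotient.mk_eq_zero _).mpr (Submodule.mem_span_singleton_self _)]
      exact N.zero_mem
    rw [hg] at this
    exact Ideal.mem_span_singleton.mp this
  obtain ⟨e, hen, hassoc⟩ := (dvd_prime_pow hp n).mp hgn
  refine ⟨e, hen, ?_⟩
  rw [← Submodule.map_comap_eq_of_surjective (Submodule.mkQ_surjective _) N, hg,
    show Submodule.span R {g} = Ideal.span {p ^ e} from
      Ideal.span_singleton_eq_span_singleton.mpr hassoc,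
    Ideal.span, Submodule.map_span, Set.image_singleton]
  rfl

def mulPow (p : R) (a b : ℕ) : (R ⧸ Ideal.span {p ^ a}) →ₗ[R] (R ⧸ Ideal.span {p ^ b}) :=
  Submodule.mapQ _ _ (LinearMap.mulLeft R (p ^ (b - a))) <| by
    rw [Ideal.span, Submodule.span_singleton_le_iff_mem, Submodule.mem_comap,
      LinearMap.mulLeft_apply, ← pow_add]
    exact Ideal.mem_span_singleton.mpr (pow_dvd_pow p (by omega))

theorem mulPow_mk (a b : ℕ) (z : R) :
    mulPow p a b (Ideal.Quotient.mk _ z) = Ideal.Quotient.mk _ (p ^ (b - a) * z) :=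
  rfl

end CyclicModule

def IsAdmissible {ι : Type*} (d c : ι → ℕ) : Prop :=
  (∀ j, c j ≤ d j) ∧ ∀ j j', c j' ≤ c j + (d j' - d j)

theorem isAdmissible_iff_monotone {α : Type*} [LinearOrder α] {i E : α → ℕ}
    (hi : Monotone i) :
    IsAdmissible i E ↔ (∀ k, E k ≤ i k) ∧ Monotone E ∧ Monotone fun k => i k - E k := by
  refine ⟨fun ⟨hle, h⟩ => ⟨hle, fun k k' hk => ?_, fun k k' hk => ?_⟩,
    fun ⟨hle, hmono, hmono'⟩ => ⟨hle, fun k k' => ?_⟩⟩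
  · have := h k' k; have := hi hk
    omega
  · have := h k k'; have := hle k; have := hle k'; have := hi hk
    dsimp only
    omega
  · rcases le_total k k' with hk | hk
    · have : i k - E k ≤ i k' - E k' := hmono' hk
      have := hle k; have := hle k'
      omega
    · have := hmono hk
      omega

/-- Admissible functions for `i ∘ κ` are constant on the fibres of `κ`. -/
noncomputable def admissibleCompOrderIso {ι ι' : Type*} {κ : ι → ι'}
    (hκ : Function.Surjective κ) (i : ι' → ℕ) :
    {E // IsAdmissible i E} ≃o {c // IsAdmissible (i ∘ κ) c} := by
  refine .ofSurjective (.ofMapLEIff (fun E => ⟨E.1 ∘ κ, fun j => E.2.1 (κ j),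
    fun j j' => E.2.2 _ _⟩) fun E E' => ?_) fun c => ?_
  · exact (hκ.forall (p := fun k => E.1 k ≤ E'.1 k)).symm
  · have hfib (j j' : ι) (h : κ j = κ j') : c.1 j = c.1 j' := by
      have h₁ := c.2.2 j j'; have h₂ := c.2.2 j' j
      simp only [Function.comp_apply, h] at h₁ h₂
      omega
    set s := Function.surjInv hκ
    refine ⟨⟨c.1 ∘ s, fun k => ?_, fun k k' => ?_⟩, ?_⟩
    · simpa [s, Function.surjInv_eq hκ k] using c.2.1 (s k)
    · simpa [s, Function.surjInv_eq hκ] using c.2.2 (s k) (s k')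
    · exact Subtype.ext (funext fun j => hfib _ _ (Function.surjInv_eq hκ (κ j)))

section PartialSums

variable {m : ℕ}

def predDiff (f : Fin m → ℕ) (k : Fin m) : ℕ :=
  if k.val = 0 then f k else f k - f ⟨k.val - 1, by omega⟩

theorem Finset.Iic_fin_mk_zero (h : 0 < m) : Finset.Iic (⟨0, h⟩ : Fin m) = {⟨0, h⟩} := by
  ext ⟨j, _⟩
  simp [Fin.le_def]

theorem Finset.Iic_fin_mk_succ {n : ℕ} (h : n + 1 < m) :
    Finset.Iic (⟨n + 1, h⟩ : Fin m) = insert ⟨n + 1, h⟩ (Finset.Iic ⟨n, by omega⟩) := by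
  ext ⟨j, _⟩
  simp only [Finset.mem_Iic, Finset.mem_insert, Fin.le_def, Fin.ext_iff]
  omega

theorem monotone_sum_Iic {α : Type*} [Preorder α] [LocallyFiniteOrderBot α] (f : α → ℕ) :
    Monotone fun k => ∑ j ∈ Finset.Iic k, f j :=
  fun _ _ h => Finset.sum_le_sum_of_subset (Finset.Iic_subset_Iic.mpr h)

theorem sum_Iic_predDiff {f : Fin m → ℕ} (hf : Monotone f) (k : Fin m) :
    ∑ j ∈ Finset.Iic k, predDiff f j = f k := by
  obtain ⟨n, hn⟩ := k
  induction n with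
  | zero => simp [Finset.Iic_fin_mk_zero, predDiff]
  | succ n ih =>
    have : f ⟨n, by omega⟩ ≤ f ⟨n + 1, hn⟩ := hf (Fin.mk_le_mk.mpr n.le_succ)
    rw [Finset.Iic_fin_mk_succ, Finset.sum_insert (by simp [Fin.le_def]), ih]
    simp only [predDiff, Nat.add_one_ne_zero, if_false, Nat.add_sub_cancel]
    omega

theorem predDiff_sum_Iic (δ : Fin m → ℕ) :
    predDiff (fun k => ∑ j ∈ Finset.Iic k, δ j) = δ := by
  funext ⟨n, hn⟩
  cases n with
  | zero => simp [Finset.Iic_fin_mk_zero, predDiff]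
  | succ n =>
    simp only [predDiff, Nat.add_one_ne_zero, if_false, Nat.add_sub_cancel]
    rw [Finset.Iic_fin_mk_succ, Finset.sum_insert (by simp [Fin.le_def]), Nat.add_sub_cancel]

theorem predDiff_tsub_le_predDiff {i E : Fin m → ℕ} (hi : Monotone i) (hE : IsAdmissible i E)
    (k : Fin m) : predDiff (fun k => i k - E k) k ≤ predDiff i k := by
  obtain ⟨hle, hEmono, -⟩ := (isAdmissible_iff_monotone hi).mp hE
  have hk : (⟨k.val - 1, by omega⟩ : Fin m) ≤ k := Fin.mk_le_of_le_val (Nat.sub_le _ _)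
  have := hi hk; have := hEmono hk; have := hle k
  simp only [predDiff]
  split_ifs <;> omega

noncomputable def admissibleOrderIsoGammaPoset {i : Fin m → ℕ} (hi : Monotone i) :
    {E // IsAdmissible i E}ᵒᵈ ≃o GammaPoset m (predDiff i) := by
  have hsum (E : {E // IsAdmissible i E}) (k : Fin m) :
      ∑ j ∈ Finset.Iic k, predDiff (fun k => i k - E.1 k) j = i k - E.1 k :=
    sum_Iic_predDiff ((isAdmissible_iff_monotone hi).mp E.2).2.2 k
  refine .ofSurjective (.ofMapLEIff (fun E =>
    ⟨_, predDiff_tsub_le_predDiff hi (OrderDual.ofDual E).2⟩) fun E E' => ?_) fun δ => ?_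
  · show (∀ k, _ ≤ _) ↔ ∀ k, (OrderDual.ofDual E').1 k ≤ (OrderDual.ofDual E).1 k
    refine forall_congr' fun k => ?_
    rw [hsum, hsum]
    have := (OrderDual.ofDual E).2.1 k; have := (OrderDual.ofDual E').2.1 k
    omega
  · set S := fun k => ∑ j ∈ Finset.Iic k, δ.1 j
    have hS (k : Fin m) : S k ≤ i k :=
      (Finset.sum_le_sum fun j _ => δ.2 j).trans_eq (sum_Iic_predDiff hi k)
    have hiS : (fun k => i k - S k) = fun k => ∑ j ∈ Finset.Iic k, (predDiff i j - δ.1 j) := by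
      funext k
      rw [Finset.sum_tsub_distrib _ fun j _ => δ.2 j, sum_Iic_predDiff hi]
    have hE : IsAdmissible i fun k => i k - S k := by
      refine (isAdmissible_iff_monotone hi).mpr ⟨fun k => Nat.sub_le _ _, ?_, ?_⟩
      · rw [hiS]
        exact monotone_sum_Iic _
      · simpa only [Nat.sub_sub_self (hS _)] using monotone_sum_Iic δ.1
    refine ⟨OrderDual.toDual ⟨_, hE⟩, Subtype.ext ?_⟩
    show predDiff (fun k => i k - (i k - S k)) = δ.1
    simp only [Nat.sub_sub_self (hS _)]
    exact predDiff_sum_Iic δ.1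

end PartialSums

theorem DirectSum.mem_of_forall_lof_mem {R ι : Type*} [Semiring R] [DecidableEq ι]
    {M : ι → Type*} [∀ j, AddCommMonoid (M j)] [∀ j, Module R (M j)]
    {N : Submodule R (⨁ j, M j)} {v : ⨁ j, M j} (h : ∀ j, lof R ι M j (v j) ∈ N) :
    v ∈ N := by
  classical
  rw [← sum_support_of v]
  exact N.sum_mem fun j _ => h j

section BlockSubmodule

variable {R : Type*} [CommRing R] {p : R} {ι : Type*} {d : ι → ℕ}

/-- `⨁_j p^{c_j} R/(p^{d_j})`. -/
def blockSubmodule (p : R) (d c : ι → ℕ) : Submodule R (⨁ j, R ⧸ Ideal.span {p ^ d j}) :=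
  ⨅ j, (Submodule.span R {Ideal.Quotient.mk (Ideal.span {p ^ d j}) (p ^ c j)}).comap
    (component R ι (fun j => R ⧸ Ideal.span {p ^ d j}) j)

theorem mem_blockSubmodule {c : ι → ℕ} {v : ⨁ j, R ⧸ Ideal.span {p ^ d j}} :
    v ∈ blockSubmodule p d c ↔
      ∀ j, v j ∈ Submodule.span R {Ideal.Quotient.mk (Ideal.span {p ^ d j}) (p ^ c j)} := by
  simp only [blockSubmodule, Submodule.mem_iInf, Submodule.mem_comap]
  rfl

variable [DecidableEq ι]

theorem lof_mem_blockSubmodule {c : ι → ℕ} {j : ι} {x : R ⧸ Ideal.span {p ^ d j}} :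
    lof R ι _ j x ∈ blockSubmodule p d c ↔
      x ∈ Submodule.span R {Ideal.Quotient.mk (Ideal.span {p ^ d j}) (p ^ c j)} := by
  rw [mem_blockSubmodule]
  refine ⟨fun h => by simpa using h j, fun h j' => ?_⟩
  by_cases hj : j = j'
  · subst hj
    simpa using h
  · rw [lof_eq_of, of_eq_of_ne _ _ _ (Ne.symm hj)]
    exact zero_mem _

theorem blockSubmodule_le_iff [IsDomain R] (hp0 : p ≠ 0) (hpu : ¬IsUnit p) {c c' : ι → ℕ}
    (hc' : ∀ j, c' j ≤ d j) : blockSubmodule p d c ≤ blockSubmodule p d c' ↔ c' ≤ c := by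
  refine ⟨fun h j => ?_, fun h v hv => ?_⟩
  · have := @h (lof R ι _ j _) (lof_mem_blockSubmodule.mpr (Submodule.subset_span rfl))
    exact (mk_pow_mem_span_mk_pow_iff hp0 hpu (hc' j)).mp (lof_mem_blockSubmodule.mp this)
  · rw [mem_blockSubmodule] at hv ⊢
    exact fun j => Submodule.span_le.mpr (Set.singleton_subset_iff.mpr
      ((mk_pow_mem_span_mk_pow_iff hp0 hpu (hc' j)).mpr (h j))) (hv j)

theorem isFullyInvariant_blockSubmodule [IsDomain R] (hp : p ≠ 0) {c : ι → ℕ}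
    (hc : ∀ j j', c j' ≤ c j + (d j' - d j)) : (blockSubmodule p d c).IsFullyInvariant := by
  intro φ v hv
  refine mem_of_forall_lof_mem fun j => mem_blockSubmodule.mpr fun j' => ?_
  exact map_span_mk_pow_le hp (hc j j') _
    (Submodule.mem_map_of_mem (f := component R ι _ j' ∘ₗ φ ∘ₗ lof R ι _ j)
      (mem_blockSubmodule.mp hv j))

theorem exists_isAdmissible_eq_blockSubmodule [IsDomain R] [IsPrincipalIdealRing R]
    (hp : Prime p) {N : Submodule R (⨁ j, R ⧸ Ideal.span {p ^ d j})}
    (hN : N.IsFullyInvariant) : ∃ c, IsAdmissible d c ∧ N = blockSubmodule p d c := by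
  choose c hcd hc using fun j =>
    exists_eq_span_mk_pow hp (d j) (N.comap (lof R ι (fun j => R ⧸ Ideal.span {p ^ d j}) j))
  have hlof (j : ι) (x : R ⧸ Ideal.span {p ^ d j}) :
      lof R ι _ j x ∈ N ↔ x ∈ Submodule.span R {Ideal.Quotient.mk _ (p ^ c j)} := by
    rw [← hc j]
    rfl
  refine ⟨c, ⟨hcd, fun j j' => ?_⟩, ?_⟩
  · have hgen := (hlof j _).mpr (Submodule.subset_span rfl)
    have := hN (lof R ι _ j' ∘ₗ mulPow p (d j) (d j') ∘ₗ component R ι _ j) hgen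
    rw [Submodule.mem_comap, LinearMap.comp_apply, LinearMap.comp_apply, component.lof_self,
      mulPow_mk, ← pow_add, hlof,
      mk_pow_mem_span_mk_pow_iff hp.ne_zero hp.not_isUnit (hcd j')] at this
    omega
  · ext v
    rw [mem_blockSubmodule]
    refine ⟨fun hv j => (hlof j _).mp ?_,
      fun hv => mem_of_forall_lof_mem fun j => (hlof j _).mpr (hv j)⟩
    exact hN (lof R ι _ j ∘ₗ component R ι _ j) hv

noncomputable def admissibleOrderIsoFullyInvariant [IsDomain R] [IsPrincipalIdealRing R]
    (hp : Prime p) (d : ι → ℕ) :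
    {c // IsAdmissible d c}ᵒᵈ ≃o
      {N : Submodule R (⨁ j, R ⧸ Ideal.span {p ^ d j}) // N.IsFullyInvariant} :=
  .ofSurjective (.ofMapLEIff (fun c => ⟨blockSubmodule p d (OrderDual.ofDual c).1,
      isFullyInvariant_blockSubmodule hp.ne_zero (OrderDual.ofDual c).2.2⟩)
    fun _ c' => blockSubmodule_le_iff hp.ne_zero hp.not_isUnit (OrderDual.ofDual c').2.1)
    fun N => by
      obtain ⟨c, hc, hN⟩ := exists_isAdmissible_eq_blockSubmodule hp N.2
      exact ⟨OrderDual.toDual ⟨c, hc⟩, Subtype.ext hN.symm⟩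

end BlockSubmodule

/-- A `K`-subspace preserved by all `R`-linear endomorphisms is preserved by the homotheties,
hence is an `R`-submodule. -/
noncomputable def fullyInvariantOrderIsoRestrictScalars (K : Type*) {R M : Type*} [Semiring K]
    [CommSemiring R] [AddCommMonoid M] [Module K M] [Module R M] [SMul K R]
    [IsScalarTower K R M] :
    {N : Submodule R M // N.IsFullyInvariant} ≃o
      {W : Submodule K M // ∀ φ : M →ₗ[R] M, ∀ w ∈ W, φ w ∈ W} :=
  .ofSurjective (.ofMapLEIff (fun N => ⟨N.1.restrictScalars K, fun φ _ hw => N.2 φ hw⟩)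
    fun _ _ => Submodule.restrictScalars_le K)
    fun W => ⟨⟨{ W.1.toAddSubmonoid with
      smul_mem' := fun r v hv => W.2 (r • LinearMap.id) v hv },
      fun φ _ hw => W.2 φ _ hw⟩, rfl⟩

theorem stmt13_general (lam : ℂ) (ι : Type*) [DecidableEq ι]
    (d : ι → ℕ)
    (m : ℕ) (i : Fin m → ℕ) (hmono : StrictMono i)
    (hrange : ∀ j : ι, ∃ k : Fin m, d j = i k) (hsur : ∀ k : Fin m, ∃ j : ι, d j = i k)
    (Δ : Fin m → ℕ)
    (hΔ : ∀ k : Fin m, Δ k = if k.val = 0 then i k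
      else i k - i ⟨k.val - 1, Nat.lt_of_le_of_lt (Nat.sub_le _ _) k.isLt⟩) :
    Nonempty
      ({W : Submodule ℂ (⨁ j : ι, Polynomial ℂ ⧸ Ideal.span {(X - C lam) ^ d j}) //
          FullyInv lam ι d W} ≃o GammaPoset m Δ) := by
  choose κ hκ using hrange
  obtain rfl : d = i ∘ κ := funext hκ
  obtain rfl : Δ = predDiff i := funext hΔ
  have hκ_surj : Function.Surjective κ := fun k =>
    (hsur k).imp fun _ hj => hmono.injective hj
  exact ⟨(fullyInvariantOrderIsoRestrictScalars ℂ).symm.trans <|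
    (admissibleOrderIsoFullyInvariant (prime_X_sub_C lam) _).symm.trans <|
    (admissibleCompOrderIso hκ_surj i).symm.dual.trans
      (admissibleOrderIsoGammaPoset hmono.monotone)⟩

/-- For `V = ⨁_j ℂ[x]/(p^{d j})` with distinct block sizes `i 0 < ⋯ < i (m-1)` and block
increments `Δ 0 = i 0`, `Δ k = i k - i (k-1)`, the set of fully invariant subspaces of `V`
ordered by inclusion is order-isomorphic to `Γ_Δ`. -/
theorem stmt13 (lam : ℂ) (ι : Type*) [Fintype ι] [DecidableEq ι]
    (d : ι → ℕ) (hd : ∀ j, 1 ≤ d j)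
    (m : ℕ) (i : Fin m → ℕ) (hmono : StrictMono i)
    (hrange : ∀ j : ι, ∃ k : Fin m, d j = i k) (hsur : ∀ k : Fin m, ∃ j : ι, d j = i k)
    (Δ : Fin m → ℕ)
    (hΔ : ∀ k : Fin m, Δ k = if k.val = 0 then i k
      else i k - i ⟨k.val - 1, Nat.lt_of_le_of_lt (Nat.sub_le _ _) k.isLt⟩) :
    Nonempty
      ({W : Submodule ℂ (⨁ j : ι, Polynomial ℂ ⧸ Ideal.span {(X - C lam) ^ d j}) //
          FullyInv lam ι d W} ≃o GammaPoset m Δ) :=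
  stmt13_general lam ι d m i hmono hrange hsur Δ hΔ
end
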